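/- arXiv:math/0607447 — 10 statements merged into one kernel-verified Lean document; each statement's English description precedes it below -/
import Mathlib

section
/- For the potential function f(t) = (1+t)^3 and the code C_θ ⊂ S^3 parametrized rationally by sinθ = 2u/(1+u²), cosθ = (1−u²)/(1+u²), the energy difference satisfies E_f(C_{D_4}) − E_f(C_θ) = −18·(u⁶ − 6u⁴ − 12u³ + 3u² − 2)²/(u²+1)⁶. In particular E_f(C_{D_4}) ≤ E_f(C_θ) for all real u. -/
open Real

noncomputable def energyC (f : ℝ → ℝ) (θ : ℝ) : ℝ :=
  18 * (f 0 + f (Real.sin (2 * θ)))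
    + 36 * (f (Real.sin θ) + f (Real.cos θ))
    + 36 * (f (Real.sin θ ^ 2 - Real.cos θ ^ 2 / 2) + f (Real.cos θ ^ 2 - Real.sin θ ^ 2 / 2))
    + 72 * (f (-(Real.sin θ / 2)) + f (-(Real.cos θ / 2)) + f (Real.sin (2 * θ) / 4)
        + f (-(Real.sin (2 * θ) / 2)))
    + 84 * f (-(1/2))

noncomputable def energyD4 (f : ℝ → ℝ) : ℝ :=
  24 * f (-1) + 192 * (f (1/2) + f (-(1/2))) + 144 * f 0

/-!
Both codes have the same weighted moments of degree at most two (total weight 552, first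
moment −24, second moment 120), so for a cubic potential the energy difference is the
leading coefficient times the difference of third moments. Using `sin² θ + cos² θ = 1`, the
latter is `9/8 (3σ³ − 9σ − 2)²` with `σ = sin θ + cos θ`, and under the rational
parametrization `3σ³ − 9σ − 2 = 4 (u⁶ − 6u⁴ − 12u³ + 3u² − 2) / (1 + u²)³`.
-/

theorem energyC_sub_energyD4_of_cubic {f : ℝ → ℝ} {a b c d : ℝ}
    (hf : ∀ t, f t = a + b * t + c * t ^ 2 + d * t ^ 3) (θ : ℝ) :
    energyC f θ - energyD4 f
      = 9 / 8 * d * (3 * (sin θ + cos θ) ^ 3 - 9 * (sin θ + cos θ) - 2) ^ 2 := by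
  have := sin_sq_add_cos_sq θ
  simp only [energyC, energyD4, sin_two_mul, hf]
  grind

theorem stmt0 (u θ : ℝ)
    (hs : Real.sin θ = 2 * u / (1 + u ^ 2))
    (hc : Real.cos θ = (1 - u ^ 2) / (1 + u ^ 2)) :
    energyD4 (fun t => (1 + t) ^ 3) - energyC (fun t => (1 + t) ^ 3) θ
        = -18 * (u ^ 6 - 6 * u ^ 4 - 12 * u ^ 3 + 3 * u ^ 2 - 2) ^ 2 / (u ^ 2 + 1) ^ 6
      ∧ energyD4 (fun t => (1 + t) ^ 3) ≤ energyC (fun t => (1 + t) ^ 3) θ := by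
  have hdiff := energyC_sub_energyD4_of_cubic (f := fun t => (1 + t) ^ 3)
    (a := 1) (b := 3) (c := 3) (d := 1) (fun t => by ring) θ
  have hσ : 3 * (sin θ + cos θ) ^ 3 - 9 * (sin θ + cos θ) - 2
      = 4 * (u ^ 6 - 6 * u ^ 4 - 12 * u ^ 3 + 3 * u ^ 2 - 2) / (u ^ 2 + 1) ^ 3 := by
    rw [hs, hc]
    field_simp
    ring
  constructor
  · rw [← neg_sub, hdiff, hσ]
    field_simp
    ring
  · linarith [sq_nonneg (3 * (sin θ + cos θ) ^ 3 - 9 * (sin θ + cos θ) - 2)]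
end

section
/- For every θ ∈ ℝ and every polynomial f of degree at most 2, E_f(C_θ) = E_f(C_{D_4}), where E_f(C_θ) and E_f(C_{D_4}) are given by the explicit formulas below. -/
/-! Both energies are linear in `f`, so for quadratic `f` they only see the moments of order
`0, 1, 2` of the two weighted point configurations. Those moments are `552, -24, 120` for both;
for `C_θ` this is a consequence of `sin² θ + cos² θ = 1` and `sin 2θ = 2 sin θ cos θ`. -/

open Real

theorem energyC_quadratic (a b c θ : ℝ) :
    energyC (fun t => a * t ^ 2 + b * t + c) θ = 120 * a - 24 * b + 552 * c := by
  simp only [energyC, sin_two_mul]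
  linear_combination (18 * b + a * (45 * (sin θ ^ 2 + cos θ ^ 2) + 99)) * sin_sq_add_cos_sq θ

theorem energyD4_quadratic (a b c : ℝ) :
    energyD4 (fun t => a * t ^ 2 + b * t + c) = 120 * a - 24 * b + 552 * c := by
  simp only [energyD4]
  ring

theorem stmt1 (θ : ℝ) (f : Polynomial ℝ) (hf : f.degree ≤ 2) :
    energyC (fun t => f.eval t) θ = energyD4 (fun t => f.eval t) := by
  have hquad (t : ℝ) : f.eval t = f.coeff 2 * t ^ 2 + f.coeff 1 * t + f.coeff 0 := by
    conv_lhs => rw [Polynomial.eq_quadratic_of_degree_le_two hf]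
    simp
  simp only [hquad, energyC_quadratic, energyD4_quadratic]
end

section
/- For f(t) = (1+t)^8, there exists θ ∈ ℝ such that E_f(C_θ) < E_f(C_{D_4}). (For example θ with cos θ and sin θ near the values at θ ≈ 2.5294 works; note E_f(C_{D_4}) = 5065.5 while the minimum of E_f(C_θ) is approximately 5064.95.) -/
/-!
`E_f(C_θ)` depends on `θ` only through the point `(cos θ, sin θ)` of the unit circle, so it
suffices to exhibit a rational point of the circle at which the energy is below
`E_f(C_{D_4}) = 10131/2`. The Pythagorean triple `(325, 228, 397)` gives the point
`(-325/397, 228/397)`, close to `(cos θ, sin θ)` for the minimiser `θ ≈ 2.5294`; there the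
energy is an explicit rational, `≈ 5064.96`.
-/

open Real

theorem Real.exists_cos_sin_eq_of_sq_add_sq_eq_one {x y : ℝ} (h : x ^ 2 + y ^ 2 = 1) :
    ∃ θ : ℝ, cos θ = x ∧ sin θ = y := by
  obtain ⟨θ, hθ⟩ := (Complex.norm_eq_one_iff (x + y * Complex.I)).mp <| by
    rw [Complex.norm_add_mul_I, h, Real.sqrt_one]
  exact ⟨θ, by simpa using congrArg Complex.re hθ, by simpa using congrArg Complex.im hθ⟩

theorem stmt2 : ∃ θ : ℝ,
    energyC (fun t => (1 + t) ^ 8) θ < energyD4 (fun t => (1 + t) ^ 8) := by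
  obtain ⟨θ, hc, hs⟩ :=
    exists_cos_sin_eq_of_sq_add_sq_eq_one (x := -(325 / 397)) (y := 228 / 397) (by norm_num)
  refine ⟨θ, ?_⟩
  simp only [energyC, energyD4, sin_two_mul, hs, hc]
  norm_num
end

section
/- For f(t) = (1+t)^k with k a nonnegative integer, if 18·f((√7−1)/3) > 24 f(−1) + 192(f(1/2)+f(−1/2)) + 144 f(0), which holds for all k ≥ 75, then E_f(C_{D_4}) < E_f(C_θ) for every θ with sin 2θ ≠ 0 and sinθ ≠ cosθ. -/
/-!
Write `α = (√7 - 1)/3`, the positive root of `3α² + 2α - 2 = 0`. For every `θ` one of the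
inner products `sin θ`, `cos θ`, `sin 2θ`, `sin²θ - cos²θ/2`, `cos²θ - sin²θ/2` is at least `α`:
if the last two are below `α`, then `sin²θ` and `cos²θ` both lie strictly between `α²` and
`(1 + 2α)/3 = 1 - α²`, so if moreover `sin θ, cos θ < α`, both are below `-α` and
`sin 2θ > 2α² > α`. Each of these five values carries weight at least `18` in `E_f(C_θ)` and every
other term is nonnegative, so `E_f(C_θ) ≥ 18 f(α)` for any `f` that is nonnegative and monotone on
`[-1, ∞)`. For `f(t) = (1+t)^k` with `k ≥ 75` the bound `18 f(α) > E_f(C_{D_4})` follows by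
induction on `k` from `1 + α > 1.5485`.
-/

open Real

open Set

lemma lt_sqrt_seven : (26455 / 10000 : ℝ) < √7 := by
  rw [lt_sqrt (by norm_num)]
  norm_num

lemma sqrt_seven_quadratic : 3 * ((√7 - 1) / 3) ^ 2 + 2 * ((√7 - 1) / 3) - 2 = 0 := by
  have h7 : √7 ^ 2 = 7 := sq_sqrt (by norm_num)
  linear_combination h7 / 3

lemma le_or_le_of_sq_add_sq_eq_one {s c : ℝ} (h : s ^ 2 + c ^ 2 = 1) :
    (√7 - 1) / 3 ≤ s ∨ (√7 - 1) / 3 ≤ c ∨ (√7 - 1) / 3 ≤ 2 * s * c ∨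
      (√7 - 1) / 3 ≤ s ^ 2 - c ^ 2 / 2 ∨ (√7 - 1) / 3 ≤ c ^ 2 - s ^ 2 / 2 := by
  set α := (√7 - 1) / 3
  have hα : 3 * α ^ 2 + 2 * α - 2 = 0 := sqrt_seven_quadratic
  have hα_half : 1 / 2 < α := by simp only [α]; linarith [lt_sqrt_seven]
  by_contra! hlt
  obtain ⟨hs, hc, hsc, hs2, hc2⟩ := hlt
  have hs_sq : α ^ 2 < s ^ 2 := by nlinarith
  have hc_sq : α ^ 2 < c ^ 2 := by nlinarith
  have hs_neg : s < -α := by nlinarith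
  have hc_neg : c < -α := by nlinarith
  nlinarith [mul_pos (by linarith : 0 < -α - s) (by linarith : 0 < -α - c)]

theorem mul_le_energyC {f : ℝ → ℝ} (hf : MonotoneOn f (Ici (-1))) (hf0 : 0 ≤ f (-1)) (θ : ℝ) :
    18 * f ((√7 - 1) / 3) ≤ energyC f θ := by
  have hnonneg : ∀ t, -1 ≤ t → 0 ≤ f t := fun t ht => hf0.trans (hf self_mem_Ici ht ht)
  have hα : -1 ≤ (√7 - 1) / 3 := by linarith [sqrt_nonneg 7]
  have hmono : ∀ t, (√7 - 1) / 3 ≤ t → f ((√7 - 1) / 3) ≤ f t :=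
    fun t ht => hf hα (hα.trans ht) ht
  have hsc := sin_sq_add_cos_sq θ
  have hcase := le_or_le_of_sq_add_sq_eq_one hsc
  rw [← sin_two_mul] at hcase
  have := neg_one_le_sin θ; have := sin_le_one θ
  have := neg_one_le_cos θ; have := cos_le_one θ
  have := neg_one_le_sin (2 * θ); have := sin_le_one (2 * θ)
  have := sq_nonneg (sin θ); have := sq_nonneg (cos θ)
  have := hnonneg 0 (by norm_num)
  have := hnonneg (sin (2 * θ)) (by linarith)
  have := hnonneg (sin θ) (by linarith)
  have := hnonneg (cos θ) (by linarith)
  have := hnonneg (sin θ ^ 2 - cos θ ^ 2 / 2) (by linarith)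
  have := hnonneg (cos θ ^ 2 - sin θ ^ 2 / 2) (by linarith)
  have := hnonneg (-(sin θ / 2)) (by linarith)
  have := hnonneg (-(cos θ / 2)) (by linarith)
  have := hnonneg (sin (2 * θ) / 4) (by linarith)
  have := hnonneg (-(sin (2 * θ) / 2)) (by linarith)
  have := hnonneg (-(1 / 2)) (by norm_num)
  unfold energyC
  rcases hcase with h | h | h | h | h <;> linarith [hmono _ h]

lemma monotoneOn_one_add_pow (k : ℕ) : MonotoneOn (fun t : ℝ => (1 + t) ^ k) (Ici (-1)) :=
  fun _ hx _ _ hxy => pow_le_pow_left₀ (by linarith [mem_Ici.mp hx]) (by linarith) k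

lemma energyD4_one_add_pow_le {k : ℕ} (hk : k ≠ 0) :
    energyD4 (fun t => (1 + t) ^ k) ≤ 192 * (3 / 2) ^ k + 336 := by
  have hhalf : ((1 : ℝ) / 2) ^ k ≤ 1 := pow_le_one₀ (by norm_num) (by norm_num)
  simp only [energyD4]
  norm_num [zero_pow hk]
  linarith

lemma three_halves_pow_add_lt {k : ℕ} (hk : 75 ≤ k) :
    192 * (3 / 2 : ℝ) ^ k + 336 < 18 * (3097 / 2000) ^ k := by
  induction k, hk using Nat.le_induction with
  | base => norm_num
  | succ n _ ih =>
    have : (0 : ℝ) < (3 / 2) ^ n := by positivity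
    rw [pow_succ, pow_succ]
    nlinarith

theorem stmt3 (k : ℕ) :
    (18 * (1 + (Real.sqrt 7 - 1) / 3) ^ k > energyD4 (fun t => (1 + t) ^ k) →
      ∀ θ : ℝ, Real.sin (2 * θ) ≠ 0 → Real.sin θ ≠ Real.cos θ →
        energyD4 (fun t => (1 + t) ^ k) < energyC (fun t => (1 + t) ^ k) θ)
    ∧ (75 ≤ k → 18 * (1 + (Real.sqrt 7 - 1) / 3) ^ k > energyD4 (fun t => (1 + t) ^ k)) := by
  refine ⟨fun hk θ _ _ => ?_, fun hk => ?_⟩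
  · exact hk.trans_le (mul_le_energyC (monotoneOn_one_add_pow k) (by positivity) θ)
  · have hbase : (3097 / 2000 : ℝ) ^ k ≤ (1 + (√7 - 1) / 3) ^ k :=
      pow_le_pow_left₀ (by norm_num) (by linarith [lt_sqrt_seven]) k
    have := energyD4_one_add_pow_le (k := k) (by omega)
    linarith [three_halves_pow_add_lt hk]
end

section
/- For every θ with sin 2θ ≠ 0 and sinθ ≠ cosθ, the maximum of the eleven inner product values occurring in C_θ is at least (√7−1)/3, i.e. max{0, sin 2θ, sinθ, cosθ, sin²θ − cos²θ/2, cos²θ − sin²θ/2, −sinθ/2, −cosθ/2, (sin 2θ)/4, −(sin 2θ)/2, −1/2} ≥ (√7−1)/3. -/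
/-!
Write `s = sin θ`, `c = cos θ` and `t = (√7 - 1) / 3`, the positive root of `1 - 3t²/2 = t`.
If `s² ≤ t²` then `c² - s²/2 = 1 - 3s²/2 ≥ t`, and symmetrically if `c² ≤ t²`.
Otherwise `|s|, |c| > t`: if one of `s`, `c` is positive it exceeds `t`, and if both are
negative then `sin 2θ = 2sc > 2t² ≥ t` because `t ≥ 1/2`.
-/

open Real

lemma one_sub_three_mul_sq_div_two_sqrt_seven_sub_one_div_three :
    1 - 3 * ((√7 - 1) / 3) ^ 2 / 2 = (√7 - 1) / 3 := by
  linear_combination (-1 / 6 : ℝ) * Real.sq_sqrt (show (0 : ℝ) ≤ 7 by norm_num)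

lemma half_le_sqrt_seven_sub_one_div_three : (1 / 2 : ℝ) ≤ (√7 - 1) / 3 := by
  have : (5 / 2 : ℝ) ≤ √7 := Real.le_sqrt_of_sq_le (by norm_num)
  linarith

lemma le_sq_sub_half_sq_of_sq_le {s c t : ℝ} (hsc : s ^ 2 + c ^ 2 = 1)
    (ht : t ≤ 1 - 3 * t ^ 2 / 2) (hs : s ^ 2 ≤ t ^ 2) : t ≤ c ^ 2 - s ^ 2 / 2 := by
  nlinarith

lemma le_two_mul_or_le_or_le_of_sq_lt {s c t : ℝ} (ht : 1 / 2 ≤ t)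
    (hs : t ^ 2 < s ^ 2) (hc : t ^ 2 < c ^ 2) : t ≤ 2 * s * c ∨ t ≤ s ∨ t ≤ c := by
  rcases le_or_gt s 0 with hs0 | hs0
  · rcases le_or_gt c 0 with hc0 | hc0
    · have hs' : t < -s := by nlinarith
      have hc' : t < -c := by nlinarith
      left
      nlinarith [mul_lt_mul'' hs' hc' (by linarith) (by linarith)]
    · right; right; nlinarith
  · right; left; nlinarith

theorem stmt4_general (θ : ℝ) :
    (Real.sqrt 7 - 1) / 3 ≤
      max 0 (max (Real.sin (2 * θ)) (max (Real.sin θ) (max (Real.cos θ)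
        (max (Real.sin θ ^ 2 - Real.cos θ ^ 2 / 2) (max (Real.cos θ ^ 2 - Real.sin θ ^ 2 / 2)
          (max (-(Real.sin θ / 2)) (max (-(Real.cos θ / 2)) (max (Real.sin (2 * θ) / 4)
            (max (-(Real.sin (2 * θ) / 2)) (-(1/2))))))))))) := by
  set t := (√7 - 1) / 3
  have hroot : t ≤ 1 - 3 * t ^ 2 / 2 := one_sub_three_mul_sq_div_two_sqrt_seven_sub_one_div_three.ge
  have hsc := sin_sq_add_cos_sq θ
  rw [sin_two_mul]
  simp only [le_max_iff]
  by_cases hs : sin θ ^ 2 ≤ t ^ 2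
  · have := le_sq_sub_half_sq_of_sq_le hsc hroot hs
    tauto
  by_cases hc : cos θ ^ 2 ≤ t ^ 2
  · have := le_sq_sub_half_sq_of_sq_le ((add_comm _ _).trans hsc) hroot hc
    tauto
  have := le_two_mul_or_le_or_le_of_sq_lt half_le_sqrt_seven_sub_one_div_three
    (not_le.mp hs) (not_le.mp hc)
  tauto

theorem stmt4 (θ : ℝ) (h1 : Real.sin (2 * θ) ≠ 0) (h2 : Real.sin θ ≠ Real.cos θ) :
    (Real.sqrt 7 - 1) / 3 ≤
      max 0 (max (Real.sin (2 * θ)) (max (Real.sin θ) (max (Real.cos θ)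
        (max (Real.sin θ ^ 2 - Real.cos θ ^ 2 / 2) (max (Real.cos θ ^ 2 - Real.sin θ ^ 2 / 2)
          (max (-(Real.sin θ / 2)) (max (-(Real.cos θ / 2)) (max (Real.sin (2 * θ) / 4)
            (max (-(Real.sin (2 * θ) / 2)) (-(1/2))))))))))) :=
  stmt4_general θ
end

section
/- For every nonnegative integer k ≤ 5 and every θ ∈ ℝ, the sum ∑_{j=0}^{5} (1 + cos(θ + jπ/3)/√3)^k is independent of θ. -/
open Real

theorem stmt8 (k : ℕ) (hk : k ≤ 5) (θ₁ θ₂ : ℝ) :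
    ∑ j ∈ Finset.range 6, (1 + Real.cos (θ₁ + j * π / 3) / Real.sqrt 3) ^ k =
      ∑ j ∈ Finset.range 6, (1 + Real.cos (θ₂ + j * π / 3) / Real.sqrt 3) ^ k := by
  have hr : Real.sqrt 3 ^ 2 = 3 := Real.sq_sqrt (by norm_num)
  have hr0 : Real.sqrt 3 ≠ 0 := by positivity
  have hinv : (Real.sqrt 3)⁻¹ = Real.sqrt 3 / 3 := by
    field_simp
    exact hr.symm
  have hc : ∀ θ : ℝ,
      Real.cos (θ + (0:ℝ) * π / 3) = Real.cos θ ∧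
      Real.cos (θ + (1:ℝ) * π / 3) = Real.cos θ * (1/2) - Real.sin θ * (Real.sqrt 3 / 2) ∧
      Real.cos (θ + (2:ℝ) * π / 3) = -(Real.cos θ * (1/2)) - Real.sin θ * (Real.sqrt 3 / 2) ∧
      Real.cos (θ + (3:ℝ) * π / 3) = -Real.cos θ ∧
      Real.cos (θ + (4:ℝ) * π / 3) = -(Real.cos θ * (1/2)) + Real.sin θ * (Real.sqrt 3 / 2) ∧
      Real.cos (θ + (5:ℝ) * π / 3) = Real.cos θ * (1/2) + Real.sin θ * (Real.sqrt 3 / 2) := by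
    intro θ
    refine ⟨by norm_num, ?_, ?_, ?_, ?_, ?_⟩
    · rw [show θ + (1:ℝ) * π / 3 = θ + π/3 by ring, Real.cos_add, Real.cos_pi_div_three,
        Real.sin_pi_div_three]
    · rw [show θ + (2:ℝ) * π / 3 = (θ - π/3) + π by ring, Real.cos_add_pi, Real.cos_sub,
        Real.cos_pi_div_three, Real.sin_pi_div_three]
      ring
    · rw [show θ + (3:ℝ) * π / 3 = θ + π by ring, Real.cos_add_pi]
    · rw [show θ + (4:ℝ) * π / 3 = (θ + π/3) + π by ring, Real.cos_add_pi, Real.cos_add,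
        Real.cos_pi_div_three, Real.sin_pi_div_three]
      ring
    · rw [show θ + (5:ℝ) * π / 3 = (θ - π/3) + 2*π by ring, Real.cos_add_two_pi, Real.cos_sub,
        Real.cos_pi_div_three, Real.sin_pi_div_three]
  obtain ⟨h10, h11, h12, h13, h14, h15⟩ := hc θ₁
  obtain ⟨h20, h21, h22, h23, h24, h25⟩ := hc θ₂
  have hs1 := Real.sin_sq_add_cos_sq θ₁
  have hs2 := Real.sin_sq_add_cos_sq θ₂
  set c1 := Real.cos θ₁
  set s1 := Real.sin θ₁
  set c2 := Real.cos θ₂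
  set s2 := Real.sin θ₂
  set r := Real.sqrt 3
  rw [Finset.sum_range_succ, Finset.sum_range_succ, Finset.sum_range_succ,
    Finset.sum_range_succ, Finset.sum_range_succ, Finset.sum_range_one,
    Finset.sum_range_succ, Finset.sum_range_succ, Finset.sum_range_succ,
    Finset.sum_range_succ, Finset.sum_range_succ, Finset.sum_range_one]
  push_cast
  rw [h10, h11, h12, h13, h14, h15, h20, h21, h22, h23, h24, h25]
  simp only [div_eq_mul_inv, hinv]
  interval_cases k
  · norm_num
  · ring
  · linear_combination hs1 - hs2 +
      ((1/3)*s1^2 + (1/9)*s1^2*r^2 + (1/3)*c1^2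
       - (1/3)*s2^2 - (1/9)*s2^2*r^2 - (1/3)*c2^2) * hr
  · linear_combination (3:ℝ) * hs1 - 3 * hs2 +
      (s1^2 + (1/3)*s1^2*r^2 + c1^2 - s2^2 - (1/3)*s2^2*r^2 - c2^2) * hr
  · linear_combination (25/4 + s1^2/4 + c1^2/4) * hs1 - (25/4 + s2^2/4 + c2^2/4) * hs2 +
      (2*s1^2 + (2/3)*s1^2*r^2 + (1/12)*s1^4 + (1/36)*s1^4*r^2 + (1/108)*s1^4*r^4
        + (1/324)*s1^4*r^6 + 2*c1^2 + (1/6)*c1^2*s1^2 + (1/18)*c1^2*s1^2*r^2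
        + (1/54)*c1^2*s1^2*r^4 + (1/12)*c1^4 + (1/36)*c1^4*r^2
       - 2*s2^2 - (2/3)*s2^2*r^2 - (1/12)*s2^4 - (1/36)*s2^4*r^2 - (1/108)*s2^4*r^4
        - (1/324)*s2^4*r^6 - 2*c2^2 - (1/6)*c2^2*s2^2 - (1/18)*c2^2*s2^2*r^2
        - (1/54)*c2^2*s2^2*r^4 - (1/12)*c2^4 - (1/36)*c2^4*r^2) * hr
  · linear_combination (45/4 + 5*s1^2/4 + 5*c1^2/4) * hs1 - (45/4 + 5*s2^2/4 + 5*c2^2/4) * hs2 +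
      ((10/3)*s1^2 + (10/9)*s1^2*r^2 + (5/12)*s1^4 + (5/36)*s1^4*r^2 + (5/108)*s1^4*r^4
        + (5/324)*s1^4*r^6 + (10/3)*c1^2 + (5/6)*c1^2*s1^2 + (5/18)*c1^2*s1^2*r^2
        + (5/54)*c1^2*s1^2*r^4 + (5/12)*c1^4 + (5/36)*c1^4*r^2
       - (10/3)*s2^2 - (10/9)*s2^2*r^2 - (5/12)*s2^4 - (5/36)*s2^4*r^2 - (5/108)*s2^4*r^4
        - (5/324)*s2^4*r^6 - (10/3)*c2^2 - (5/6)*c2^2*s2^2 - (5/18)*c2^2*s2^2*r^2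
        - (5/54)*c2^2*s2^2*r^4 - (5/12)*c2^4 - (5/36)*c2^4*r^2) * hr
end

section
/- For every integer k ≥ 6, the function θ ↦ ∑_{j=0}^{5} (1 + cos(θ + jπ/3)/√3)^k on [0, π/3] attains its global minimum uniquely at θ = π/6. -/
open Real Finset

namespace S9

def hp : List ℝ → ℕ → ℝ
  | _, 0 => 1
  | [], _+1 => 0
  | a :: l, n+1 => a * hp (a :: l) n + hp l (n+1)
termination_by l n => l.length + n

def ep : List ℝ → ℕ → ℝ
  | _, 0 => 1
  | [], _+1 => 0
  | a :: l, n+1 => ep l (n+1) + a * ep l n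

lemma hp_zero (l : List ℝ) : hp l 0 = 1 := by cases l <;> simp [hp]
lemma ep_zero (l : List ℝ) : ep l 0 = 1 := by cases l <;> simp [ep]
lemma hp_cons_succ (a : ℝ) (l : List ℝ) (n : ℕ) :
    hp (a :: l) (n+1) = a * hp (a :: l) n + hp l (n+1) := by rw [hp]
lemma ep_cons_succ (a : ℝ) (l : List ℝ) (n : ℕ) :
    ep (a :: l) (n+1) = ep l (n+1) + a * ep l n := by rw [ep]

lemma hp_nonneg {l : List ℝ} (h : ∀ x ∈ l, 0 ≤ x) : ∀ n, 0 ≤ hp l n := by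
  induction l with
  | nil => intro n; cases n with
    | zero => norm_num [hp]
    | succ m => norm_num [hp]
  | cons a t ih =>
    have ha : 0 ≤ a := h a (by simp)
    have ht : ∀ x ∈ t, 0 ≤ x := fun x hx => h x (by simp [hx])
    intro n
    induction n with
    | zero => rw [hp_zero]; norm_num
    | succ m ihm =>
      rw [hp_cons_succ]
      have h1 := ih ht (m+1)
      positivity

lemma ep_eq_zero {l : List ℝ} : ∀ {n}, l.length < n → ep l n = 0 := by
  induction l with
  | nil =>
    intro n hn
    match n, hn with
    | m+1, _ => simp [ep]
  | cons a t ih =>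
    intro n hn
    match n, hn with
    | m+1, hn =>
      rw [ep_cons_succ, ih (by simpa using Nat.lt_of_succ_lt hn),
        ih (by simpa using Nat.lt_of_succ_lt_succ hn)]
      ring

lemma eh_aux (l : List ℝ) : ∀ n : ℕ, hp l (n+1) =
    ∑ p ∈ Finset.HasAntidiagonal.antidiagonal n, (-1:ℝ)^p.1 * ep l (p.1+1) * hp l p.2 := by
  induction l with
  | nil =>
    intro n
    have h1 : ∀ p : ℕ × ℕ, (-1:ℝ)^p.1 * ep [] (p.1+1) * hp [] p.2 = 0 := by
      intro p; simp [ep]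
    simp only [h1, Finset.sum_const_zero]
    simp [hp]
  | cons a t ih =>
    intro n
    cases n with
    | zero =>
      have h0 := ih 0
      simp only [Finset.Nat.antidiagonal_zero, Finset.sum_singleton] at h0 ⊢
      rw [hp_cons_succ, ep_cons_succ, hp_zero, ep_zero]
      rw [hp_zero, pow_zero, one_mul] at h0
      linarith
    | succ m =>
      set Z := ∑ p ∈ Finset.HasAntidiagonal.antidiagonal m, (-1:ℝ)^p.1 * ep t (p.1+1) * hp (a::t) p.2 with hZdef
      set W := ∑ p ∈ Finset.HasAntidiagonal.antidiagonal m, (-1:ℝ)^p.1 * ep t (p.1+1) * hp t (p.2+1) with hWdef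
      have hX : ∑ p ∈ Finset.HasAntidiagonal.antidiagonal (m+1), (-1:ℝ)^p.1 * ep t (p.1+1) * hp (a::t) p.2
          = a * Z + hp t (m+2) := by
        rw [Finset.Nat.sum_antidiagonal_succ']
        have hc : ∀ p ∈ Finset.HasAntidiagonal.antidiagonal m, (-1:ℝ)^p.1 * ep t (p.1+1) * hp (a::t) (p.2+1)
            = a * ((-1:ℝ)^p.1 * ep t (p.1+1) * hp (a::t) p.2)
              + (-1:ℝ)^p.1 * ep t (p.1+1) * hp t (p.2+1) := by
          intro p _; rw [hp_cons_succ]; ring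
        rw [Finset.sum_congr rfl hc, Finset.sum_add_distrib, ← Finset.mul_sum, ← hZdef, ← hWdef]
        have ihm1 := ih (m+1)
        rw [Finset.Nat.sum_antidiagonal_succ'] at ihm1
        rw [← hWdef] at ihm1
        simp only [hp_zero] at ihm1 ⊢
        linarith
      have hY : ∑ p ∈ Finset.HasAntidiagonal.antidiagonal (m+1), (-1:ℝ)^p.1 * ep t p.1 * hp (a::t) p.2
          = hp (a::t) (m+1) - Z := by
        rw [Finset.Nat.sum_antidiagonal_succ]
        have hc : ∀ p ∈ Finset.HasAntidiagonal.antidiagonal m, (-1:ℝ)^(p.1+1) * ep t (p.1+1) * hp (a::t) p.2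
            = -((-1:ℝ)^p.1 * ep t (p.1+1) * hp (a::t) p.2) := by
          intro p _; ring
        rw [Finset.sum_congr rfl hc, Finset.sum_neg_distrib, ← hZdef]
        rw [ep_zero]
        ring
      have hsplit : ∑ p ∈ Finset.HasAntidiagonal.antidiagonal (m+1), (-1:ℝ)^p.1 * ep (a::t) (p.1+1) * hp (a::t) p.2
          = (∑ p ∈ Finset.HasAntidiagonal.antidiagonal (m+1), (-1:ℝ)^p.1 * ep t (p.1+1) * hp (a::t) p.2)
            + a * ∑ p ∈ Finset.HasAntidiagonal.antidiagonal (m+1), (-1:ℝ)^p.1 * ep t p.1 * hp (a::t) p.2 := by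
        rw [Finset.mul_sum, ← Finset.sum_add_distrib]
        refine Finset.sum_congr rfl fun p _ => ?_
        rw [ep_cons_succ]; ring
      rw [hsplit, hX, hY, hp_cons_succ]
      ring

lemma eh (l : List ℝ) (n : ℕ) :
    ∑ i ∈ Finset.range (n+2), (-1:ℝ)^i * ep l i * hp l (n+1-i) = 0 := by
  rw [Finset.sum_range_succ']
  have h := eh_aux l n
  rw [Finset.Nat.sum_antidiagonal_eq_sum_range_succ_mk] at h
  have hc : ∀ i ∈ Finset.range (n+1), (-1:ℝ)^(i+1) * ep l (i+1) * hp l (n+1-(i+1))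
      = -((-1:ℝ)^((i, n-i) : ℕ×ℕ).1 * ep l (((i, n-i) : ℕ×ℕ).1+1) * hp l ((i, n-i) : ℕ×ℕ).2) := by
    intro i _
    simp only [Nat.succ_sub_succ]
    ring
  rw [Finset.sum_congr rfl hc, Finset.sum_neg_distrib, ← h]
  rw [ep_zero, pow_zero]
  simp

lemma sum_swap' (N : ℕ) (f : ℕ → ℕ → ℝ) :
    ∑ i ∈ Finset.range N, ∑ m ∈ Finset.range (N - i), f i m
      = ∑ m ∈ Finset.range N, ∑ i ∈ Finset.range (N - m), f i m := by
  rw [Finset.sum_sigma', Finset.sum_sigma']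
  refine Finset.sum_nbij' (fun p => ⟨p.2, p.1⟩) (fun p => ⟨p.2, p.1⟩) ?_ ?_ ?_ ?_ ?_
  · intro p hp
    simp only [Finset.mem_sigma, Finset.mem_range] at hp ⊢
    omega
  · intro p hp
    simp only [Finset.mem_sigma, Finset.mem_range] at hp ⊢
    omega
  · intro p _ ; rfl
  · intro p _ ; rfl
  · intro p _ ; rfl

noncomputable def u (x : ℝ) : ℝ := 1 + Real.cos x / √3

noncomputable def L (θ : ℝ) : List ℝ :=
  [u θ, u (θ+π/3), u (θ+2*π/3), u (θ+π), u (θ+4*π/3), u (θ+5*π/3)]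

lemma r3 : (√3:ℝ)^2 = 3 := Real.sq_sqrt (by norm_num)

lemma r3ne : (√3:ℝ) ≠ 0 := by
  have : (0:ℝ) < √3 := Real.sqrt_pos.mpr (by norm_num)
  linarith

lemma div_sqrt3 (y : ℝ) : y / √3 = y * √3 / 3 := by
  have h := r3
  field_simp
  linear_combination -y * h

lemma hc1 (θ : ℝ) : Real.cos (θ + π/3) = Real.cos θ * (1/2) - Real.sin θ * (√3/2) := by
  rw [Real.cos_add, Real.cos_pi_div_three, Real.sin_pi_div_three]

lemma hc2 (θ : ℝ) : Real.cos (θ + 2*π/3) = -(Real.cos θ * (1/2)) - Real.sin θ * (√3/2) := by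
  have e : θ + 2*π/3 = π - (π/3 - θ) := by ring
  rw [e, Real.cos_pi_sub, Real.cos_sub, Real.cos_pi_div_three, Real.sin_pi_div_three]
  ring

lemma hc4 (θ : ℝ) : Real.cos (θ + 4*π/3) = -(Real.cos θ * (1/2)) + Real.sin θ * (√3/2) := by
  have e : θ + 4*π/3 = (θ + π/3) + π := by ring
  rw [e, Real.cos_add_pi, hc1]
  ring

lemma hc5 (θ : ℝ) : Real.cos (θ + 5*π/3) = Real.cos θ * (1/2) + Real.sin θ * (√3/2) := by
  have e : θ + 5*π/3 = (θ + 2*π/3) + π := by ring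
  rw [e, Real.cos_add_pi, hc2]
  ring


lemma pval1 (θ : ℝ) : u θ + u (θ+π/3) + u (θ+2*π/3) + u (θ+π) + u (θ+4*π/3) + u (θ+5*π/3) = 6 := by
  simp only [u, div_sqrt3, hc1, hc2, Real.cos_add_pi, hc4, hc5]
  linear_combination (0) * Real.sin_sq_add_cos_sq θ + (0) * r3

lemma pval2 (θ : ℝ) : u θ^2 + u (θ+π/3)^2 + u (θ+2*π/3)^2 + u (θ+π)^2 + u (θ+4*π/3)^2 + u (θ+5*π/3)^2 = 7 := by
  simp only [u, div_sqrt3, hc1, hc2, Real.cos_add_pi, hc4, hc5]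
  linear_combination ((1/9:ℝ)*√3^4) * Real.sin_sq_add_cos_sq θ + ((1/3:ℝ) + (1/9:ℝ)*√3^2 + (-1/9:ℝ)*Real.cos θ^2*√3^2) * r3

lemma pval3 (θ : ℝ) : u θ^3 + u (θ+π/3)^3 + u (θ+2*π/3)^3 + u (θ+π)^3 + u (θ+4*π/3)^3 + u (θ+5*π/3)^3 = 9 := by
  simp only [u, div_sqrt3, hc1, hc2, Real.cos_add_pi, hc4, hc5]
  linear_combination ((1/3:ℝ)*√3^4) * Real.sin_sq_add_cos_sq θ + ((1:ℝ) + (1/3:ℝ)*√3^2 + (-1/3:ℝ)*Real.cos θ^2*√3^2) * r3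

lemma pval4 (θ : ℝ) : u θ^4 + u (θ+π/3)^4 + u (θ+2*π/3)^4 + u (θ+π)^4 + u (θ+4*π/3)^4 + u (θ+5*π/3)^4 = (49/4) := by
  simp only [u, div_sqrt3, hc1, hc2, Real.cos_add_pi, hc4, hc5]
  linear_combination ((2/3:ℝ)*√3^4 + (1/324:ℝ)*√3^8 + (1/324:ℝ)*Real.sin θ^2*√3^8 + (1/54:ℝ)*Real.cos θ^2*√3^6 + (-1/324:ℝ)*Real.cos θ^2*√3^8) * Real.sin_sq_add_cos_sq θ + ((25/12:ℝ) + (25/36:ℝ)*√3^2 + (1/108:ℝ)*√3^4 + (1/324:ℝ)*√3^6 + (-2/3:ℝ)*Real.cos θ^2*√3^2 + (-1/162:ℝ)*Real.cos θ^2*√3^6 + (-1/108:ℝ)*Real.cos θ^4*√3^4 + (1/324:ℝ)*Real.cos θ^4*√3^6) * r3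

lemma pval5 (θ : ℝ) : u θ^5 + u (θ+π/3)^5 + u (θ+2*π/3)^5 + u (θ+π)^5 + u (θ+4*π/3)^5 + u (θ+5*π/3)^5 = (69/4) := by
  simp only [u, div_sqrt3, hc1, hc2, Real.cos_add_pi, hc4, hc5]
  linear_combination ((10/9:ℝ)*√3^4 + (5/324:ℝ)*√3^8 + (5/324:ℝ)*Real.sin θ^2*√3^8 + (5/54:ℝ)*Real.cos θ^2*√3^6 + (-5/324:ℝ)*Real.cos θ^2*√3^8) * Real.sin_sq_add_cos_sq θ + ((15/4:ℝ) + (5/4:ℝ)*√3^2 + (5/108:ℝ)*√3^4 + (5/324:ℝ)*√3^6 + (-10/9:ℝ)*Real.cos θ^2*√3^2 + (-5/162:ℝ)*Real.cos θ^2*√3^6 + (-5/108:ℝ)*Real.cos θ^4*√3^4 + (5/324:ℝ)*Real.cos θ^4*√3^6) * r3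

lemma eval1 (θ : ℝ) : ep (L θ) 1 = 6 := by
  simp only [L]
  simp only [ep]
  simp only [u, div_sqrt3, hc1, hc2, Real.cos_add_pi, hc4, hc5]
  linear_combination (0) * Real.sin_sq_add_cos_sq θ + (0) * r3

lemma eval2 (θ : ℝ) : ep (L θ) 2 = (29/2) := by
  simp only [L]
  simp only [ep]
  simp only [u, div_sqrt3, hc1, hc2, Real.cos_add_pi, hc4, hc5]
  linear_combination ((-1/18:ℝ)*√3^4) * Real.sin_sq_add_cos_sq θ + ((-1/6:ℝ) + (-1/18:ℝ)*√3^2 + (1/18:ℝ)*Real.cos θ^2*√3^2) * r3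

lemma eval3 (θ : ℝ) : ep (L θ) 3 = 18 := by
  simp only [L]
  simp only [ep]
  simp only [u, div_sqrt3, hc1, hc2, Real.cos_add_pi, hc4, hc5]
  linear_combination ((-2/9:ℝ)*√3^4) * Real.sin_sq_add_cos_sq θ + ((-2/3:ℝ) + (-2/9:ℝ)*√3^2 + (2/9:ℝ)*Real.cos θ^2*√3^2) * r3

lemma eval4 (θ : ℝ) : ep (L θ) 4 = (193/16) := by
  simp only [L]
  simp only [ep]
  simp only [u, div_sqrt3, hc1, hc2, Real.cos_add_pi, hc4, hc5]
  linear_combination ((-1/3:ℝ)*√3^4 + (1/1296:ℝ)*√3^8 + (1/1296:ℝ)*Real.sin θ^2*√3^8 + (1/216:ℝ)*Real.cos θ^2*√3^6 + (-1/1296:ℝ)*Real.cos θ^2*√3^8) * Real.sin_sq_add_cos_sq θ + ((-47/48:ℝ) + (-47/144:ℝ)*√3^2 + (1/432:ℝ)*√3^4 + (1/1296:ℝ)*√3^6 + (1/3:ℝ)*Real.cos θ^2*√3^2 + (-1/648:ℝ)*Real.cos θ^2*√3^6 + (-1/432:ℝ)*Real.cos θ^4*√3^4 + (1/1296:ℝ)*Real.cos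 θ^4*√3^6) * r3

lemma eval5 (θ : ℝ) : ep (L θ) 5 = (33/8) := by
  simp only [L]
  simp only [ep]
  simp only [u, div_sqrt3, hc1, hc2, Real.cos_add_pi, hc4, hc5]
  linear_combination ((-2/9:ℝ)*√3^4 + (1/648:ℝ)*√3^8 + (1/648:ℝ)*Real.sin θ^2*√3^8 + (1/108:ℝ)*Real.cos θ^2*√3^6 + (-1/648:ℝ)*Real.cos θ^2*√3^8) * Real.sin_sq_add_cos_sq θ + ((-5/8:ℝ) + (-5/24:ℝ)*√3^2 + (1/216:ℝ)*√3^4 + (1/648:ℝ)*√3^6 + (2/9:ℝ)*Real.cos θ^2*√3^2 + (-1/324:ℝ)*Real.cos θ^2*√3^6 + (-1/216:ℝ)*Real.cos θ^4*√3^4 + (1/648:ℝ)*Real.cos θ^4*√3^6) * r3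

lemma eval6 (θ : ℝ) : ep (L θ) 6 = 9/16 - Real.cos (3*θ)^2/432 := by
  rw [Real.cos_three_mul]
  simp only [L]
  simp only [ep]
  simp only [u, div_sqrt3, hc1, hc2, Real.cos_add_pi, hc4, hc5]
  linear_combination ((-1/18:ℝ)*√3^4 + (1/1296:ℝ)*√3^8 + (1/1296:ℝ)*Real.sin θ^2*√3^8 + (1/216:ℝ)*Real.cos θ^2*√3^6 + (-1/1296:ℝ)*Real.cos θ^2*√3^8 + (-1/11664:ℝ)*Real.cos θ^2*√3^10 + (-1/11664:ℝ)*Real.cos θ^2*Real.sin θ^2*√3^10 + (1/5832:ℝ)*Real.cos θ^4*√3^8 + (1/11664:ℝ)*Real.cos θ^4*√3^10) * Real.sin_sq_add_cos_sq θ + ((-7/48:ℝ) + (-7/144:ℝ)*√3^2 + (1/432:ℝ)*√3^4 + (1/1296:ℝ)*√3^6 + (-1/144:ℝ)*Real.cos θ^2 + (23/432:ℝ)*Real.cos θ^2*√3^2 + (-1/1296:ℝ)*Real.cos θ^2*√3^4 + (-7/3888:ℝ)*Real.cos θ^2*√3^6 + (-1/11664:ℝ)*Real.cos θ^2*√3^8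 + (1/54:ℝ)*Real.cos θ^4 + (1/162:ℝ)*Real.cos θ^4*√3^2 + (-1/3888:ℝ)*Real.cos θ^4*√3^4 + (17/11664:ℝ)*Real.cos θ^4*√3^6 + (1/5832:ℝ)*Real.cos θ^4*√3^8 + (-1/81:ℝ)*Real.cos θ^6 + (-1/243:ℝ)*Real.cos θ^6*√3^2 + (-1/729:ℝ)*Real.cos θ^6*√3^4 + (-5/11664:ℝ)*Real.cos θ^6*√3^6 + (-1/11664:ℝ)*Real.cos θ^6*√3^8) * r3

lemma root6 (x : ℝ) : u x^6 = 6*u x^5 - (29/2)*u x^4 + 18*u x^3 - (193/16)*u x^2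
    + (33/8)*u x - 9/16 + Real.cos (3*x)^2/432 := by
  have h := Real.cos_three_mul x
  simp only [u, div_sqrt3]
  linear_combination ((-1/432:ℝ)*Real.cos (3*x) + (1/144:ℝ)*Real.cos x + (-1/108:ℝ)*Real.cos x^3) * h
    + ((1/144:ℝ)*Real.cos x^2 + (-1/54:ℝ)*Real.cos x^4 + (-1/162:ℝ)*Real.cos x^4*√3^2
      + (1/81:ℝ)*Real.cos x^6 + (1/243:ℝ)*Real.cos x^6*√3^2 + (1/729:ℝ)*Real.cos x^6*√3^4) * r3

noncomputable def PP (t : ℝ) (m : ℕ) : ℝ :=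
  ∑ j ∈ Finset.range 6, (1 + Real.cos (t + j * π / 3) / Real.sqrt 3) ^ m

lemma PP_expand (t : ℝ) (m : ℕ) : PP t m = u t^m + u (t+π/3)^m + u (t+2*π/3)^m
    + u (t+π)^m + u (t+4*π/3)^m + u (t+5*π/3)^m := by
  rw [PP, Finset.sum_range_succ, Finset.sum_range_succ, Finset.sum_range_succ,
    Finset.sum_range_succ, Finset.sum_range_succ, Finset.sum_range_succ, Finset.sum_range_zero]
  push_cast
  rw [show t + 0*π/3 = t by ring, show t + 1*π/3 = t + π/3 by ring,
    show t + 3*π/3 = t + π by ring]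
  simp only [u]
  ring

lemma Prec (t : ℝ) (m : ℕ) : PP t (m+6) = 6*PP t (m+5) - (29/2)*PP t (m+4) + 18*PP t (m+3)
    - (193/16)*PP t (m+2) + (33/8)*PP t (m+1) - (9/16 - Real.cos (3*t)^2/432) * PP t m := by
  have q1 : Real.cos (3*(t+π/3))^2 = Real.cos (3*t)^2 := by
    rw [show 3*(t+π/3) = 3*t + π by ring, Real.cos_add_pi]; ring
  have q2 : Real.cos (3*(t+2*π/3))^2 = Real.cos (3*t)^2 := by
    rw [show 3*(t+2*π/3) = 3*t + 2*π by ring, Real.cos_add_two_pi]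
  have q3 : Real.cos (3*(t+π))^2 = Real.cos (3*t)^2 := by
    rw [show 3*(t+π) = 3*t + π + 2*π by ring, Real.cos_add_two_pi, Real.cos_add_pi]; ring
  have q4 : Real.cos (3*(t+4*π/3))^2 = Real.cos (3*t)^2 := by
    rw [show 3*(t+4*π/3) = 3*t + 2*π + 2*π by ring, Real.cos_add_two_pi, Real.cos_add_two_pi]
  have q5 : Real.cos (3*(t+5*π/3))^2 = Real.cos (3*t)^2 := by
    rw [show 3*(t+5*π/3) = 3*t + π + 2*π + 2*π by ring, Real.cos_add_two_pi,
      Real.cos_add_two_pi, Real.cos_add_pi]; ring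
  rw [PP_expand, PP_expand, PP_expand, PP_expand, PP_expand, PP_expand, PP_expand]
  linear_combination (u t)^m * root6 t + (u (t+π/3))^m * root6 (t+π/3)
    + (u (t+2*π/3))^m * root6 (t+2*π/3) + (u (t+π))^m * root6 (t+π)
    + (u (t+4*π/3))^m * root6 (t+4*π/3) + (u (t+5*π/3))^m * root6 (t+5*π/3)
    + ((u (t+π/3))^m/432) * q1 + ((u (t+2*π/3))^m/432) * q2 + ((u (t+π))^m/432) * q3
    + ((u (t+4*π/3))^m/432) * q4 + ((u (t+5*π/3))^m/432) * q5

lemma u_pos (x : ℝ) : 0 < u x := by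
  rw [u]
  have h3 : (0:ℝ) < √3 := Real.sqrt_pos.mpr (by norm_num)
  have h1 : (1:ℝ) < √3 := by nlinarith [r3]
  have hc := Real.neg_one_le_cos x
  have h4 : (-1:ℝ)/√3 ≤ Real.cos x/√3 := by
    exact (div_le_div_iff_of_pos_right h3).mpr hc
  have h5 : (1:ℝ)/√3 < 1 := by rw [div_lt_one h3]; exact h1
  have h6 : (-1:ℝ)/√3 = -(1/√3) := by ring
  linarith

lemma PP_pos (t : ℝ) (m : ℕ) : 0 < PP t m := by
  rw [PP]
  apply Finset.sum_pos
  · intro j _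
    apply pow_pos
    have := u_pos (t + j * π / 3)
    rw [u] at this
    exact this
  · exact ⟨0, by simp⟩

theorem main_ineq (k : ℕ) (hk : 6 ≤ k) (θ : ℝ) (hθ : θ ∈ Set.Icc (0:ℝ) (π/3))
    (hne : θ ≠ π/6) : PP (π/6) k < PP θ k := by
  obtain ⟨hθ0, hθ1⟩ := hθ
  have hπ := Real.pi_pos
  have hcos3 : Real.cos (3*θ) ≠ 0 := by
    intro h0
    rcases Real.cos_eq_zero_iff.mp h0 with ⟨n, hn⟩
    have i1 : (n:ℝ) < 1 := by nlinarith
    have i2 : (-1:ℝ) < (n:ℝ) := by nlinarith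
    have hn1 : n = 0 := by
      have a1 : n < 1 := by exact_mod_cast i1
      have a2 : -1 < n := by exact_mod_cast i2
      omega
    rw [hn1] at hn
    apply hne
    push_cast at hn
    linarith
  have hδ : 0 < Real.cos (3*θ)^2/432 := by positivity
  set δ := Real.cos (3*θ)^2/432 with hδdef
  have hLpos : ∀ x ∈ L θ, 0 ≤ x := by
    intro x hx
    simp only [L, List.mem_cons, List.not_mem_nil, or_false] at hx
    rcases hx with h|h|h|h|h|h <;> (subst h; exact (u_pos _).le)
  set H : ℕ → ℝ := hp (L θ) with hH
  set A : ℕ → ℝ := fun i => (-1:ℝ)^i * ep (L θ) i with hA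
  set Q : ℕ → ℝ := PP (π/6) with hQ
  set c : ℕ → ℝ := fun K => ∑ m ∈ Finset.range (K+1), Q m * H (K-m) with hcdef
  have hH0 : H 0 = 1 := by rw [hH]; exact hp_zero _
  have hHnn : ∀ n, 0 ≤ H n := fun n => by rw [hH]; exact hp_nonneg hLpos n
  have hA0 : A 0 = 1 := by rw [hA]; simp [ep_zero]
  have hA1 : A 1 = -6 := by rw [hA]; norm_num [eval1 θ]
  have hA2 : A 2 = 29/2 := by rw [hA]; norm_num [eval2 θ]
  have hA3 : A 3 = -18 := by rw [hA]; norm_num [eval3 θ]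
  have hA4 : A 4 = 193/16 := by rw [hA]; norm_num [eval4 θ]
  have hA5 : A 5 = -(33/8) := by rw [hA]; norm_num [eval5 θ]
  have hA6 : A 6 = 9/16 - δ := by
    have h := eval6 θ
    rw [← hδdef] at h
    rw [hA]; norm_num [h]
  have hA7 : ∀ i, A (7+i) = 0 := by
    intro i
    rw [hA]
    have h : ep (L θ) (7+i) = 0 := ep_eq_zero (by simp [L]; omega)
    norm_num [h]
  have Qrec : ∀ m, Q (m+6) = 6*Q (m+5) - (29/2)*Q (m+4) + 18*Q (m+3)
      - (193/16)*Q (m+2) + (33/8)*Q (m+1) - (9/16)*Q m := by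
    intro m
    have h := Prec (π/6) m
    rw [show 3*(π/6) = π/2 by ring, Real.cos_pi_div_two] at h
    rw [hQ]
    linarith [h]
  have Dbase : ∀ j, j ≤ 5 → PP θ j = Q j := by
    intro j hj
    rw [hQ]
    interval_cases j
    · rw [PP, PP]; simp
    · rw [PP_expand, PP_expand]; simp only [pow_one]; linarith [pval1 θ, pval1 (π/6)]
    · rw [PP_expand, PP_expand]; linarith [pval2 θ, pval2 (π/6)]
    · rw [PP_expand, PP_expand]; linarith [pval3 θ, pval3 (π/6)]
    · rw [PP_expand, PP_expand]; linarith [pval4 θ, pval4 (π/6)]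
    · rw [PP_expand, PP_expand]; linarith [pval5 θ, pval5 (π/6)]
  have Arec : ∀ n, ∑ i ∈ Finset.range (n+2), A i * H (n+1-i) = 0 := by
    intro n
    exact eh (L θ) n
  have Drec : ∀ K : ℕ, ∑ i ∈ Finset.range (7+K), A i * (PP θ (K+6-i) - Q (K+6-i))
      = δ * Q K := by
    intro K
    rw [Finset.sum_range_add]
    have h2 : ∀ i ∈ Finset.range K, A (7+i) * (PP θ (K+6-(7+i)) - Q (K+6-(7+i))) = 0 := by
      intro i _; rw [hA7 i]; ring
    rw [Finset.sum_congr rfl h2, Finset.sum_const_zero, add_zero]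
    rw [Finset.sum_range_succ, Finset.sum_range_succ, Finset.sum_range_succ,
      Finset.sum_range_succ, Finset.sum_range_succ, Finset.sum_range_succ,
      Finset.sum_range_succ, Finset.sum_range_zero]
    rw [hA0, hA1, hA2, hA3, hA4, hA5, hA6]
    rw [show K+6-0 = K+6 by omega, show K+6-1 = K+5 by omega, show K+6-2 = K+4 by omega,
      show K+6-3 = K+3 by omega, show K+6-4 = K+2 by omega, show K+6-5 = K+1 by omega,
      show K+6-6 = K by omega]
    have hP := Prec θ K
    rw [← hδdef] at hP
    linear_combination hP - Qrec K
  have conv : ∀ K : ℕ, ∑ i ∈ Finset.range (K+1), A i * c (K-i) = Q K := by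
    intro K
    have e1 : ∀ i ∈ Finset.range (K+1), A i * c (K-i)
        = ∑ m ∈ Finset.range (K+1-i), A i * (Q m * H (K-i-m)) := by
      intro i hi
      simp only [Finset.mem_range] at hi
      rw [hcdef]
      simp only
      rw [show K-i+1 = K+1-i by omega, Finset.mul_sum]
    rw [Finset.sum_congr rfl e1, sum_swap' (K+1) (fun i m => A i * (Q m * H (K-i-m)))]
    have hzero : ∀ b ∈ Finset.range (K+1), b ≠ K →
        ∑ i ∈ Finset.range (K+1-b), A i * (Q b * H (K-i-b)) = 0 := by
      intro b hb hbne
      have hbK : b < K := by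
        simp only [Finset.mem_range] at hb; omega
      have e2 : ∀ i ∈ Finset.range ((K-b-1)+2), A i * (Q b * H (K-i-b))
          = Q b * (A i * H ((K-b-1)+1-i)) := by
        intro i hi
        simp only [Finset.mem_range] at hi
        rw [show K-i-b = (K-b-1)+1-i by omega]
        ring
      rw [show K+1-b = (K-b-1)+2 by omega, Finset.sum_congr rfl e2, ← Finset.mul_sum,
        Arec (K-b-1), mul_zero]
    rw [Finset.sum_eq_single_of_mem K (Finset.self_mem_range_succ K) hzero]
    rw [show K+1-K = 1 by omega, Finset.sum_range_one, hA0, show K-0-K = 0 by omega, hH0]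
    ring
  have main : ∀ K : ℕ, PP θ (K+6) - Q (K+6) = δ * c K := by
    intro K
    induction K using Nat.strong_induction_on with
    | _ K ih =>
    have hD := Drec K
    rw [show 7+K = (K+6)+1 by omega, Finset.sum_range_succ'] at hD
    rw [hA0] at hD
    have e3 : ∀ i ∈ Finset.range (K+6), A (i+1) * (PP θ (K+6-(i+1)) - Q (K+6-(i+1)))
        = A (i+1) * (PP θ (K+5-i) - Q (K+5-i)) := by
      intro i _; rw [show K+6-(i+1) = K+5-i by omega]
    rw [Finset.sum_congr rfl e3, Finset.sum_range_add] at hD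
    have e4 : ∀ i ∈ Finset.range 6, A (K+i+1) * (PP θ (K+5-(K+i)) - Q (K+5-(K+i))) = 0 := by
      intro i hi
      simp only [Finset.mem_range] at hi
      rw [show K+5-(K+i) = 5-i by omega, Dbase (5-i) (by omega)]
      ring
    rw [Finset.sum_congr rfl e4, Finset.sum_const_zero, add_zero] at hD
    have e5 : ∀ i ∈ Finset.range K, A (i+1) * (PP θ (K+5-i) - Q (K+5-i))
        = δ * (A (i+1) * c (K-1-i)) := by
      intro i hi
      simp only [Finset.mem_range] at hi
      rw [show K+5-i = (K-1-i)+6 by omega, ih (K-1-i) (by omega)]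
      ring
    rw [Finset.sum_congr rfl e5, ← Finset.mul_sum] at hD
    have hcv := conv K
    rw [Finset.sum_range_succ', hA0] at hcv
    have e6 : ∀ i ∈ Finset.range K, A (i+1) * c (K-(i+1)) = A (i+1) * c (K-1-i) := by
      intro i _; rw [show K-(i+1) = K-1-i by omega]
    rw [Finset.sum_congr rfl e6] at hcv
    rw [show K+6-0 = K+6 by omega] at hD
    rw [show K-0 = K by omega] at hcv
    linear_combination hD - δ * hcv
  obtain ⟨K, rfl⟩ : ∃ K, k = K+6 := ⟨k-6, by omega⟩
  have hm := main K
  have hcpos : 0 < c K := by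
    rw [hcdef]
    apply Finset.sum_pos'
    · intro m _
      exact mul_nonneg (le_of_lt (by rw [hQ]; exact PP_pos (π/6) m)) (hHnn _)
    · refine ⟨K, Finset.self_mem_range_succ K, ?_⟩
      rw [show K-K = 0 by omega, hH0, mul_one, hQ]
      exact PP_pos (π/6) K
  have hpos : 0 < δ * c K := mul_pos hδ hcpos
  rw [hQ] at hm
  linarith

end S9

open S9 in
theorem stmt9 (k : ℕ) (hk : 6 ≤ k) :
    ∀ θ ∈ Set.Icc (0 : ℝ) (π / 3), θ ≠ π / 6 →
      ∑ j ∈ Finset.range 6, (1 + Real.cos (π / 6 + j * π / 3) / Real.sqrt 3) ^ k <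
        ∑ j ∈ Finset.range 6, (1 + Real.cos (θ + j * π / 3) / Real.sqrt 3) ^ k := by
  intro θ hθ hne
  exact S9.main_ineq k hk θ hθ hne
end

section
/- For all θ ∈ ℝ and |y| small, the generating function identity holds: ∑_{j=0}^{5} ∑_{k=0}^{∞} ((1 + cos(θ+jπ/3)/√3)^k − (1 + cos(π/6+jπ/3)/√3)^k) y^k = (y⁶ cos²θ (4cos²θ − 3)² / 216) · (1/(1−y) + 2/(2−y) + 2/(2−3y)) · ∏_{j=0}^{5} 1/(1 − y(1 + cos(θ+jπ/3)/√3)). -/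
/-! The six numbers `cos (θ + jπ/3)` are `±cos (θ + kπ/3)`, `k < 3`, and the elementary symmetric
functions of the squares `cos² (θ + kπ/3)` are `3/2`, `9/16` and `cos² (3θ) / 16`. Hence the
polynomial `∏ⱼ (z - y (1 + cos (θ + jπ/3) / √3))` depends on `θ` only through its constant term
`-y⁶ cos² (3θ) / 432`, which vanishes at `θ = π/6`. Polynomials differing by a constant have the
same derivative, so comparing their logarithmic derivatives at `z = 1` computes the difference of
the sums `∑ⱼ (1 - y (1 + cos (θ + jπ/3) / √3))⁻¹` of the geometric series. -/

open Real Finset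

theorem tsum_sub_pow_mul_pow {𝕜 : Type*} [NormedField 𝕜] [CompleteSpace 𝕜] {a b y : 𝕜}
    (ha : ‖y * a‖ < 1) (hb : ‖y * b‖ < 1) :
    ∑' k : ℕ, (a ^ k - b ^ k) * y ^ k = (1 - y * a)⁻¹ - (1 - y * b)⁻¹ := by
  rw [← ((hasSum_geometric_of_norm_lt_one ha).sub (hasSum_geometric_of_norm_lt_one hb)).tsum_eq]
  exact tsum_congr fun k ↦ by ring

theorem logDeriv_prod_sub_const {𝕜 ι : Type*} [NontriviallyNormedField 𝕜] (s : Finset ι)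
    (α : ι → 𝕜) {x : 𝕜} (hx : ∀ i ∈ s, x - α i ≠ 0) :
    logDeriv (fun z ↦ ∏ i ∈ s, (z - α i)) x = ∑ i ∈ s, (x - α i)⁻¹ := by
  rw [logDeriv_prod hx fun i _ ↦ by fun_prop]
  refine sum_congr rfl fun i _ ↦ ?_
  simp [logDeriv_apply]

theorem sum_inv_sub_sub_sum_inv_sub_of_prod_sub_eq {𝕜 ι : Type*} [NontriviallyNormedField 𝕜]
    {s : Finset ι} {α β : ι → 𝕜} {κ x : 𝕜}
    (h : ∀ z, ∏ i ∈ s, (z - α i) = ∏ i ∈ s, (z - β i) - κ)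
    (hα : ∀ i ∈ s, x - α i ≠ 0) (hβ : ∀ i ∈ s, x - β i ≠ 0) :
    ∑ i ∈ s, (x - α i)⁻¹ - ∑ i ∈ s, (x - β i)⁻¹
      = κ * (∑ i ∈ s, (x - β i)⁻¹) * ∏ i ∈ s, (x - α i)⁻¹ := by
  have hderiv : deriv (fun z ↦ ∏ i ∈ s, (z - α i)) x = deriv (fun z ↦ ∏ i ∈ s, (z - β i)) x := by
    rw [funext h, deriv_sub_const]
  have hαx := prod_ne_zero_iff.2 hα
  have hβx := prod_ne_zero_iff.2 hβ
  rw [← logDeriv_prod_sub_const s α hα, ← logDeriv_prod_sub_const s β hβ, logDeriv_apply,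
    logDeriv_apply, hderiv, prod_inv_distrib]
  rw [h x] at hαx ⊢
  field_simp
  ring

theorem cos_add_three_add_mul_pi_div_three (φ : ℝ) (j : ℕ) :
    cos (φ + ((3 + j : ℕ) : ℝ) * π / 3) = -cos (φ + j * π / 3) := by
  rw [← cos_add_pi]; push_cast; ring_nf

theorem prod_range_three_sub_mul_cos_sq (θ W T : ℝ) :
    ∏ j ∈ range 3, (W - T * cos (θ + j * π / 3) ^ 2)
      = W ^ 3 - 3 / 2 * T * W ^ 2 + 9 / 16 * T ^ 2 * W - T ^ 3 * cos (3 * θ) ^ 2 / 16 := by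
  have hsc := sin_sq_add_cos_sq θ
  have h3 : √3 ^ 2 = 3 := sq_sqrt (by norm_num)
  have hc1 : cos (θ + π / 3) = (cos θ - √3 * sin θ) / 2 := by
    rw [cos_add, cos_pi_div_three, sin_pi_div_three]; ring
  have hc2 : cos (θ + 2 * π / 3) = (-cos θ - √3 * sin θ) / 2 := by
    rw [show θ + 2 * π / 3 = θ + π / 3 + π / 3 by ring, cos_add, hc1, sin_add,
      cos_pi_div_three, sin_pi_div_three]
    linear_combination (-cos θ / 4) * h3
  have hsum : cos (θ + π / 3) ^ 2 + cos (θ + 2 * π / 3) ^ 2 = (3 - 2 * cos θ ^ 2) / 2 := by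
    rw [hc1, hc2]; linear_combination (sin θ ^ 2 / 2) * h3 + 3 / 2 * hsc
  have hprod : cos (θ + π / 3) * cos (θ + 2 * π / 3) = (3 - 4 * cos θ ^ 2) / 4 := by
    rw [hc1, hc2]; linear_combination (sin θ ^ 2 / 4) * h3 + 3 / 4 * hsc
  simp only [prod_range_succ, prod_range_zero, Nat.cast_zero, Nat.cast_one, Nat.cast_ofNat,
    zero_mul, zero_div, add_zero, one_mul, cos_three_mul]
  linear_combination -T * W * (W - T * cos θ ^ 2) * hsum
    + (W * T ^ 2 - T ^ 3 * cos θ ^ 2)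
      * (cos (θ + π / 3) * cos (θ + 2 * π / 3) + (3 - 4 * cos θ ^ 2) / 4) * hprod

theorem prod_range_six_sub_mul_cos (θ w t : ℝ) :
    ∏ j ∈ range 6, (w - t * cos (θ + j * π / 3))
      = w ^ 6 - 3 / 2 * t ^ 2 * w ^ 4 + 9 / 16 * t ^ 4 * w ^ 2 - t ^ 6 * cos (3 * θ) ^ 2 / 16 := by
  rw [show 6 = 3 + 3 from rfl, prod_range_add, ← prod_mul_distrib]
  calc ∏ j ∈ range 3, ((w - t * cos (θ + j * π / 3)) * (w - t * cos (θ + (3 + j : ℕ) * π / 3)))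
      = ∏ j ∈ range 3, (w ^ 2 - t ^ 2 * cos (θ + j * π / 3) ^ 2) :=
        prod_congr rfl fun j _ ↦ by rw [cos_add_three_add_mul_pi_div_three]; ring
    _ = _ := by rw [prod_range_three_sub_mul_cos_sq]; ring

theorem prod_range_six_sub_mul_one_add_cos_div_sqrt_three (θ y z : ℝ) :
    ∏ j ∈ range 6, (z - y * (1 + cos (θ + j * π / 3) / √3))
      = (z - y) ^ 6 - y ^ 2 / 2 * (z - y) ^ 4 + y ^ 4 / 16 * (z - y) ^ 2
        - y ^ 6 * cos (3 * θ) ^ 2 / 432 := by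
  have h3 : √3 ^ 2 = 3 := sq_sqrt (by norm_num)
  calc ∏ j ∈ range 6, (z - y * (1 + cos (θ + j * π / 3) / √3))
      = ∏ j ∈ range 6, ((z - y) - y / √3 * cos (θ + j * π / 3)) :=
        prod_congr rfl fun j _ ↦ by ring
    _ = _ := by
      rw [prod_range_six_sub_mul_cos, show (y / √3) ^ 4 = ((y / √3) ^ 2) ^ 2 by ring,
        show (y / √3) ^ 6 = ((y / √3) ^ 2) ^ 3 by ring, div_pow, h3]
      ring

theorem abs_one_add_cos_div_sqrt_three_le_two (φ : ℝ) : |1 + cos φ / √3| ≤ 2 := by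
  have h3 : 1 ≤ √3 := one_le_sqrt.2 (by norm_num)
  have hcos : |cos φ / √3| ≤ 1 := by
    rw [abs_div, abs_of_nonneg (sqrt_nonneg 3)]
    exact div_le_one_of_le₀ ((abs_cos_le_one φ).trans h3) (by linarith)
  calc |1 + cos φ / √3| ≤ |1| + |cos φ / √3| := abs_add_le _ _
    _ ≤ 2 := by rw [abs_one]; linarith

theorem sum_range_six_inv_one_sub_mul_one_add_cos_pi_div_six (y : ℝ) :
    ∑ j ∈ range 6, (1 - y * (1 + cos (π / 6 + j * π / 3) / √3))⁻¹
      = 2 * (1 / (1 - y) + 2 / (2 - y) + 2 / (2 - 3 * y)) := by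
  have h3 : √3 ≠ 0 := by positivity
  have hc0 : cos (π / 6) / √3 = 1 / 2 := by rw [cos_pi_div_six]; field_simp
  have hc1 : cos (π / 6 + π / 3) = 0 := by rw [← cos_pi_div_two]; ring_nf
  have hc2 : cos (π / 6 + 2 * π / 3) / √3 = -(1 / 2) := by
    rw [show π / 6 + 2 * π / 3 = π - π / 6 by ring, cos_pi_sub, neg_div, hc0]
  rw [show 6 = 3 + 3 from rfl, sum_range_add]
  simp only [cos_add_three_add_mul_pi_div_three, sum_range_succ, sum_range_zero, Nat.cast_zero,
    Nat.cast_one, Nat.cast_ofNat, zero_mul, zero_div, add_zero, one_mul, zero_add, neg_div, hc0,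
    hc1, hc2, neg_neg, neg_zero]
  rw [show 1 - y * (1 + 1 / 2) = (2 - 3 * y) / 2 by ring,
    show 1 - y * (1 + -(1 / 2)) = (2 - y) / 2 by ring, inv_div, inv_div]
  ring

theorem stmt10 (θ y : ℝ) (hy : |y| < 1/2) :
    ∑ j ∈ Finset.range 6, ∑' k : ℕ,
        (((1 + Real.cos (θ + j * π / 3) / Real.sqrt 3) ^ k
          - (1 + Real.cos (π / 6 + j * π / 3) / Real.sqrt 3) ^ k) * y ^ k)
      = (y ^ 6 * Real.cos θ ^ 2 * (4 * Real.cos θ ^ 2 - 3) ^ 2 / 216)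
          * (1 / (1 - y) + 2 / (2 - y) + 2 / (2 - 3 * y))
          * ∏ j ∈ Finset.range 6,
              (1 - y * (1 + Real.cos (θ + j * π / 3) / Real.sqrt 3))⁻¹ := by
  have hlt : ∀ φ, ‖y * (1 + cos φ / √3)‖ < 1 := fun φ ↦ by
    rw [norm_mul, Real.norm_eq_abs, Real.norm_eq_abs]
    nlinarith [abs_one_add_cos_div_sqrt_three_le_two φ, abs_nonneg y]
  have hne : ∀ φ, 1 - y * (1 + cos φ / √3) ≠ 0 := fun φ h ↦ by
    simpa [← sub_eq_zero.1 h] using hlt φ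
  have hprod : ∀ z, ∏ j ∈ range 6, (z - y * (1 + cos (θ + j * π / 3) / √3))
      = ∏ j ∈ range 6, (z - y * (1 + cos (π / 6 + j * π / 3) / √3))
        - y ^ 6 * cos (3 * θ) ^ 2 / 432 := fun z ↦ by
    rw [prod_range_six_sub_mul_one_add_cos_div_sqrt_three,
      prod_range_six_sub_mul_one_add_cos_div_sqrt_three, show 3 * (π / 6) = π / 2 by ring,
      cos_pi_div_two]
    ring
  calc _ = ∑ j ∈ range 6, ((1 - y * (1 + cos (θ + j * π / 3) / √3))⁻¹
          - (1 - y * (1 + cos (π / 6 + j * π / 3) / √3))⁻¹) :=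
        sum_congr rfl fun j _ ↦ tsum_sub_pow_mul_pow (hlt _) (hlt _)
    _ = y ^ 6 * cos (3 * θ) ^ 2 / 432
          * (∑ j ∈ range 6, (1 - y * (1 + cos (π / 6 + j * π / 3) / √3))⁻¹)
          * ∏ j ∈ range 6, (1 - y * (1 + cos (θ + j * π / 3) / √3))⁻¹ := by
      rw [sum_sub_distrib]
      exact sum_inv_sub_sub_sum_inv_sub_of_prod_sub_eq hprod (fun j _ ↦ hne _) (fun j _ ↦ hne _)
    _ = _ := by
      rw [sum_range_six_inv_one_sub_mul_one_add_cos_pi_div_six, cos_three_mul]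
      ring
end

section
/- Let H_0, H_1, H_2, H_3 be four 6-point subsets of S³ ⊂ ℝ⁴, each of which is a rotated regular hexagon lying in a 2-dimensional plane through the origin, and suppose H_0 ∪ H_1 ∪ H_2 ∪ H_3 is a spherical 5-design in S³. Then for any rotations of each hexagon within its own plane (i.e., replacing each H_m by a_m H_m where a_m is a rotation of the plane of H_m fixing the orthogonal complement), the union a_0H_0 ∪ a_1H_1 ∪ a_2H_2 ∪ a_3H_3 is again a spherical 5-design in S³. -/
open Real MeasureTheory

noncomputable def sphereAvg (P : MvPolynomial (Fin 4) ℝ) : ℝ :=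
  ⨍ x : Metric.sphere (0 : EuclideanSpace ℝ (Fin 4)) 1,
    MvPolynomial.eval (fun i => (x : EuclideanSpace ℝ (Fin 4)) i) P
      ∂((volume : Measure (EuclideanSpace ℝ (Fin 4))).toSphere)

/-!
With `z = exp (θ * I)`, the coordinate `cos θ * a + sin θ * b` is a Laurent polynomial in `z` with
exponents in `[-1, 1]`, so a monomial of degree `n < N` in such coordinates has exponents in
`[-n, n]`. Summing over the vertices `z * ζ ^ j` of a regular `N`-gon (`ζ` a primitive `N`-th root
of unity) kills every exponent not divisible by `N`, i.e. all but the constant term, which does not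
depend on the starting angle. So each hexagon contributes the same to the design sum after
any rotation within its plane.
-/

open Finset Polynomial

namespace IsPrimitiveRoot

variable {K : Type*} [Field K] {ζ : K} {N : ℕ}

theorem sum_range_zpow_pow_eq_zero (hζ : IsPrimitiveRoot ζ N) {m : ℤ} (hm : ¬ (N : ℤ) ∣ m) :
    ∑ j ∈ range N, (ζ ^ m) ^ j = 0 := by
  have hne : ζ ^ m ≠ 1 := fun h => hm ((hζ.zpow_eq_one_iff_dvd m).mp h)
  have hN : (ζ ^ m) ^ N = 1 := by
    rw [← zpow_natCast, ← zpow_mul, mul_comm, zpow_mul, zpow_natCast, hζ.pow_eq_one, one_zpow]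
  rw [geom_sum_eq hne, hN, sub_self, zero_div]

theorem sum_range_pow_div_pow (hζ : IsPrimitiveRoot ζ N) {c : K} (hc : c ≠ 0) {k n : ℕ}
    (hn : n < N) (hk : k < n + N) :
    ∑ j ∈ range N, (c * ζ ^ j) ^ k / (c * ζ ^ j) ^ n = if k = n then (N : K) else 0 := by
  have hterm : ∀ j : ℕ, (c * ζ ^ j) ^ k / (c * ζ ^ j) ^ n
      = c ^ ((k : ℤ) - n) * (ζ ^ ((k : ℤ) - n)) ^ j := by
    intro j
    rw [← zpow_natCast _ k, ← zpow_natCast _ n, ← zpow_sub₀ (mul_ne_zero hc (pow_ne_zero _ (hζ.ne_zero (by omega)))), mul_zpow,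
      ← zpow_natCast ζ j, ← zpow_natCast (ζ ^ _) j, ← zpow_mul, ← zpow_mul, mul_comm (j : ℤ)]
  simp_rw [hterm, ← mul_sum]
  split_ifs with hkn
  · simp [hkn]
  · rw [hζ.sum_range_zpow_pow_eq_zero, mul_zero]
    intro hdvd
    have := Int.eq_zero_of_abs_lt_dvd hdvd (by rw [abs_lt]; omega)
    omega

theorem sum_range_eval_div_pow (hζ : IsPrimitiveRoot ζ N) {c : K} (hc : c ≠ 0) {R : K[X]}
    {n : ℕ} (hn : n < N) (hR : R.natDegree < n + N) :
    ∑ j ∈ range N, R.eval (c * ζ ^ j) / (c * ζ ^ j) ^ n = N * R.coeff n := by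
  simp_rw [eval_eq_sum_range' hR, sum_div, mul_div_assoc]
  rw [sum_comm]
  simp_rw [← mul_sum]
  rw [sum_congr rfl fun k hk => by rw [hζ.sum_range_pow_div_pow hc hn (mem_range.mp hk)]]
  simp only [mul_ite, mul_zero]
  rw [sum_ite_eq', if_pos (mem_range.mpr (by omega)), mul_comm]

end IsPrimitiveRoot

open Complex in
noncomputable def cosSinQuadratic (a b : ℝ) : ℂ[X] :=
  C ((a - b * I) / 2) * X ^ 2 + C ((a + b * I) / 2)

theorem natDegree_cosSinQuadratic_le (a b : ℝ) : (cosSinQuadratic a b).natDegree ≤ 2 := by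
  unfold cosSinQuadratic
  compute_degree

open Complex in
theorem ofReal_cos_mul_add_sin_mul (a b θ : ℝ) :
    ((Real.cos θ * a + Real.sin θ * b : ℝ) : ℂ)
      = (cosSinQuadratic a b).eval (exp (θ * I)) / exp (θ * I) := by
  have hz : exp (θ * I) ≠ 0 := exp_ne_zero _
  push_cast
  rw [Complex.cos, Complex.sin, neg_mul, Complex.exp_neg, cosSinQuadratic]
  simp only [eval_add, eval_mul, eval_C, eval_pow, eval_X]
  field_simp
  ring

theorem natDegree_prod_cosSinQuadratic_pow_le {σ : Type*} [Fintype σ] (a b : σ → ℝ) (d : σ → ℕ) :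
    (∏ i, cosSinQuadratic (a i) (b i) ^ d i).natDegree ≤ 2 * ∑ i, d i := by
  rw [mul_sum]
  refine (natDegree_prod_le _ _).trans (sum_le_sum fun i _ => ?_)
  rw [mul_comm]
  exact natDegree_pow_le_of_le _ (natDegree_cosSinQuadratic_le _ _)

open Complex in
theorem ofReal_sum_range_prod_cos_add_sin_pow {σ : Type*} [Fintype σ] {N : ℕ} (a b : σ → ℝ)
    (d : σ → ℕ) (hd : ∑ i, d i < N) (t : ℝ) :
    ((∑ j ∈ range N, ∏ i,
        (Real.cos (t + j * (2 * π / N)) * a i + Real.sin (t + j * (2 * π / N)) * b i) ^ d i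
      : ℝ) : ℂ) = N * (∏ i, cosSinQuadratic (a i) (b i) ^ d i).coeff (∑ i, d i) := by
  have hζ := isPrimitiveRoot_exp N (by omega)
  have hvertex : ∀ j : ℕ, exp (((t + j * (2 * π / N) : ℝ) : ℂ) * I)
      = exp (t * I) * exp (2 * π * I / N) ^ j := by
    intro j
    rw [← Complex.exp_nat_mul, ← Complex.exp_add]
    push_cast
    ring_nf
  rw [← hζ.sum_range_eval_div_pow (Complex.exp_ne_zero (t * I)) hd]
  · simp only [Complex.ofReal_sum, Complex.ofReal_prod, Complex.ofReal_pow]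
    refine sum_congr rfl fun j _ => ?_
    simp_rw [ofReal_cos_mul_add_sin_mul, hvertex, div_pow, prod_div_distrib, prod_pow_eq_pow_sum,
      eval_prod, eval_pow]
  · have := natDegree_prod_cosSinQuadratic_pow_le a b d
    omega

theorem MvPolynomial.sum_range_eval_cos_add_sin_eq {σ : Type*} [Fintype σ] {N : ℕ}
    (P : MvPolynomial σ ℝ) (hP : P.totalDegree < N) (a b : σ → ℝ) (t s : ℝ) :
    ∑ j ∈ range N, eval (fun i => Real.cos (t + j * (2 * π / N)) * a i
        + Real.sin (t + j * (2 * π / N)) * b i) P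
      = ∑ j ∈ range N, eval (fun i => Real.cos (s + j * (2 * π / N)) * a i
        + Real.sin (s + j * (2 * π / N)) * b i) P := by
  simp only [eval_eq']
  rw [sum_comm, sum_comm (s := range N)]
  refine sum_congr rfl fun d hd => ?_
  rw [← mul_sum, ← mul_sum]
  have hdeg : ∑ i, d i < N := by
    have := le_totalDegree hd
    rw [Finsupp.sum_fintype _ _ fun _ => rfl] at this
    omega
  congr 1
  apply Complex.ofReal_injective
  rw [ofReal_sum_range_prod_cos_add_sin_pow a b d hdeg,
    ofReal_sum_range_prod_cos_add_sin_pow a b d hdeg]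

theorem stmt16_general
    (e f : Fin 4 → EuclideanSpace ℝ (Fin 4))
    (α β : Fin 4 → ℝ)
    (hdesign : ∀ P : MvPolynomial (Fin 4) ℝ, P.totalDegree ≤ 5 →
      (1 / 24) * ∑ m : Fin 4, ∑ j ∈ Finset.range 6,
          MvPolynomial.eval
            (fun i => (Real.cos (α m + j * π / 3) • e m + Real.sin (α m + j * π / 3) • f m) i) P
        = sphereAvg P) :
    ∀ P : MvPolynomial (Fin 4) ℝ, P.totalDegree ≤ 5 →
      (1 / 24) * ∑ m : Fin 4, ∑ j ∈ Finset.range 6,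
          MvPolynomial.eval
            (fun i => (Real.cos (α m + β m + j * π / 3) • e m
              + Real.sin (α m + β m + j * π / 3) • f m) i) P
        = sphereAvg P := by
  intro P hP
  rw [← hdesign P hP]
  have hangle : ∀ (t : ℝ) (j : ℕ), t + j * π / 3 = t + j * (2 * π / (6 : ℕ)) := fun t j => by
    push_cast
    ring
  simp only [hangle, PiLp.add_apply, PiLp.smul_apply, smul_eq_mul]
  congr 1
  exact sum_congr rfl fun m _ =>
    MvPolynomial.sum_range_eval_cos_add_sin_eq P (by omega) (e m) (f m) _ _

theorem stmt16
    (e f : Fin 4 → EuclideanSpace ℝ (Fin 4))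
    (horth : ∀ m, inner ℝ (e m) (e m) = (1 : ℝ) ∧ inner ℝ (f m) (f m) = (1 : ℝ) ∧
      inner ℝ (e m) (f m) = (0 : ℝ))
    (α β : Fin 4 → ℝ)
    (hdesign : ∀ P : MvPolynomial (Fin 4) ℝ, P.totalDegree ≤ 5 →
      (1 / 24) * ∑ m : Fin 4, ∑ j ∈ Finset.range 6,
          MvPolynomial.eval
            (fun i => (Real.cos (α m + j * π / 3) • e m + Real.sin (α m + j * π / 3) • f m) i) P
        = sphereAvg P) :
    ∀ P : MvPolynomial (Fin 4) ℝ, P.totalDegree ≤ 5 →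
      (1 / 24) * ∑ m : Fin 4, ∑ j ∈ Finset.range 6,
          MvPolynomial.eval
            (fun i => (Real.cos (α m + β m + j * π / 3) • e m
              + Real.sin (α m + β m + j * π / 3) • f m) i) P
        = sphereAvg P :=
  stmt16_general e f α β hdesign
end

section
/- Every 6-design on S³ has at least 30 points; in particular, no set of 24 points in S³ is a spherical 6-design. -/
open Real MeasureTheory
open Matrix

def mondeg : Fin 30 → Fin 4 → ℕ := ![
  ![0, 0, 0, 0],
  ![0, 0, 0, 1],
  ![0, 0, 1, 0],
  ![0, 0, 1, 1],
  ![0, 0, 2, 0],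
  ![0, 0, 2, 1],
  ![0, 0, 3, 0],
  ![0, 1, 0, 0],
  ![0, 1, 0, 1],
  ![0, 1, 1, 0],
  ![0, 1, 1, 1],
  ![0, 1, 2, 0],
  ![0, 2, 0, 0],
  ![0, 2, 0, 1],
  ![0, 2, 1, 0],
  ![0, 3, 0, 0],
  ![1, 0, 0, 0],
  ![1, 0, 0, 1],
  ![1, 0, 1, 0],
  ![1, 0, 1, 1],
  ![1, 0, 2, 0],
  ![1, 1, 0, 0],
  ![1, 1, 0, 1],
  ![1, 1, 1, 0],
  ![1, 2, 0, 0],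
  ![2, 0, 0, 0],
  ![2, 0, 0, 1],
  ![2, 0, 1, 0],
  ![2, 1, 0, 0],
  ![3, 0, 0, 0]]

def ptsZ : Fin 30 → Fin 4 → ℤ := ![
  ![1, 0, 2, 2],
  ![0, -2, 1, -2],
  ![-2, -2, -1, 0],
  ![0, 2, -1, 2],
  ![0, -2, 2, -1],
  ![2, -2, -1, 0],
  ![1, 0, -2, -2],
  ![2, 2, -1, 0],
  ![-1, 0, 2, -2],
  ![-1, 0, -2, -2],
  ![1, 2, 0, 2],
  ![-1, 2, 2, 0],
  ![-2, -1, 0, 2],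
  ![0, -1, -2, -2],
  ![-2, -1, 2, 0],
  ![0, 2, -1, -2],
  ![0, -2, 1, 2],
  ![-1, -2, -2, 0],
  ![2, 0, -1, 2],
  ![-2, 0, 2, 1],
  ![-2, 0, -1, 2],
  ![-1, -2, 2, 0],
  ![1, 0, 2, -2],
  ![0, 2, -2, -1],
  ![-1, 0, -2, 2],
  ![0, -2, -2, 1],
  ![2, 0, -1, -2],
  ![0, -1, 2, 2],
  ![0, -1, -2, 2],
  ![0, 2, -2, 1]]

def Nz : Matrix (Fin 30) (Fin 30) ℤ := Matrix.of ![
  ![-48, 484, 120, 568, -480, -60, 180, -60, 240, 36, 0, -180, 0, -24, -240, 192, 156, -180, 96, 240, -180, 0, 108, 80, 324, -40, -36, 200, 64, -600],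
  ![-29120, 16920, 16200, 46640, 27600, -22200, 17400, 11200, -31000, 12840, -28800, 21200, 28800, -12320, 81600, -6240, -16920, -74400, 33840, -52800, -65200, -85200, 6120, 9200, 122160, 138000, -14240, 61600, -159680, -53200],
  ![-4008, 4494, -360, 6588, 1800, -2610, 5310, 1650, -4860, 3006, -4320, 3390, 4320, -5964, 13320, -648, -2574, -5850, 4536, -9000, -7890, -11880, 1458, -240, 14634, 16980, -3186, 9540, -21216, -6420],
  ![6096, -3348, -3240, -8976, -5760, 4500, -3420, -2220, 6000, -2412, 5760, -4260, -5760, 2568, -16560, 936, 3348, 14940, -6912, 10800, 13020, 17280, -1476, -1200, -24588, -27720, 2892, -12120, 31872, 9960],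
  ![-1584, 72, 1080, 1584, 2160, -1080, 1080, 720, -1800, 648, -1440, 1440, 1440, -432, 4320, -864, -1512, -4320, 1728, -2880, -3600, -4320, 504, 720, 6912, 7920, -1008, 3600, -8928, -2160],
  ![35352, -19926, -19440, -56412, -33480, 26730, -20790, -13410, 36900, -15174, 34560, -25470, -34560, 14076, -98280, 7992, 19926, 89370, -40824, 63720, 78210, 102600, -7722, -12240, -146826, -165780, 17154, -73620, 192384, 64980],
  ![16056, -13878, -3240, -26316, -11880, 11610, -16470, -6570, 19260, -10422, 17280, -12870, -17280, 15948, -50760, 2376, 9558, 32130, -18792, 33480, 34650, 48600, -4266, -720, -64098, -72900, 10602, -35460, 87552, 26820],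
  ![-27168, 16344, 14580, 44088, 25560, -20760, 18720, 10620, -29460, 13176, -27360, 19980, 27360, -14184, 77040, -4248, -16344, -68940, 31896, -49680, -61860, -80040, 6048, 6120, 115524, 130320, -14316, 57720, -151776, -48960],
  ![3048, -1134, -1620, -3948, -2880, 2250, -1710, -1110, 3000, -1206, 2880, -2130, -2880, 1284, -8280, -72, 1134, 7470, -3456, 5400, 6510, 8640, -738, -600, -12294, -13860, 1446, -6060, 15936, 4980],
  ![-5424, 3402, 3240, 8484, 3960, -3870, 3330, 2190, -5700, 2178, -5040, 4290, 5040, -1932, 14760, -1224, -3402, -13950, 6048, -9720, -11910, -15120, 1494, 1680, 22662, 25740, -2958, 11460, -29328, -10380],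
  ![43884, -24867, -24300, -67914, -41580, 33345, -26055, -16785, 46350, -19143, 43200, -31815, -43200, 17262, -122580, 7344, 24867, 111645, -50868, 79380, 97785, 127980, -9369, -10080, -183357, -207090, 21393, -92250, 240768, 76050],
  ![14184, -9072, -4860, -23904, -14040, 10800, -11880, -5580, 16380, -8208, 15120, -10620, -15120, 10512, -43200, 864, 9072, 31860, -16848, 28080, 31500, 43200, -3024, -360, -58212, -66960, 8028, -30960, 78768, 24480],
  ![-2208, 1134, 1080, 3108, 2520, -1530, 990, 1050, -2940, 846, -2160, 2190, 2160, -804, 6840, -288, -1134, -5490, 2376, -4680, -4650, -6480, 378, 480, 8874, 10980, -1146, 4380, -12576, -3300],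
  ![78624, -46332, -43740, -123984, -74520, 59940, -46980, -30240, 83700, -34668, 77760, -57240, -77760, 32832, -220320, 14904, 46332, 200880, -91368, 142560, 176040, 230040, -16524, -22680, -329832, -372600, 38448, -166320, 431568, 141480],
  ![6768, -4374, -3240, -10548, -5400, 5130, -3510, -2250, 6300, -2646, 6480, -4230, -6480, 3204, -18360, 1728, 4374, 15930, -7776, 11880, 14130, 19440, -1458, -2880, -26514, -31860, 2826, -14940, 36576, 11700],
  ![58464, -34182, -34020, -93564, -56160, 45090, -36990, -22590, 62280, -26838, 58320, -42210, -58320, 26172, -163080, 10584, 34182, 152550, -68688, 104760, 133830, 171720, -12474, -15480, -250182, -282420, 29358, -123300, 327168, 106020],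
  ![8448, -6174, -3960, -16548, -8280, 6810, -6390, -4410, 9660, -5886, 11040, -7110, -11040, 5724, -26280, 1728, 6174, 22770, -10296, 17640, 21450, 26760, -1458, -1440, -38394, -44100, 5226, -19380, 50976, 16740],
  ![-11112, 6696, 6480, 17952, 11520, -9000, 6840, 4440, -12000, 5904, -11520, 8520, 11520, -5136, 33120, -1872, -6696, -29880, 13824, -21600, -26040, -34560, 1872, 2400, 48096, 55440, -5784, 24240, -63744, -19920],
  ![12264, -7182, -6480, -18564, -10440, 8730, -8190, -4530, 11820, -4878, 11520, -8430, -11520, 5532, -32040, 2304, 7182, 29610, -13608, 20520, 26130, 33480, -2034, -3120, -48042, -54900, 6018, -25140, 63168, 20820],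
  ![18396, -10773, -9720, -27846, -15660, 13095, -10665, -6795, 19350, -8937, 17280, -12645, -17280, 8298, -48060, 3456, 10773, 44415, -20412, 30780, 39195, 50220, -4671, -4680, -72063, -82350, 9027, -37710, 94752, 31230],
  ![-42336, 27378, 22680, 73116, 42120, -33750, 29970, 18630, -48060, 22842, -47520, 33210, 47520, -22788, 126360, -7776, -27378, -112590, 51192, -83160, -100710, -130680, 9126, 8640, 184518, 212220, -23382, 93420, -244512, -78300],
  ![11808, -6804, -5400, -18648, -12960, 9180, -7020, -3780, 12960, -6156, 12240, -9180, -12240, 5904, -34560, 1728, 6804, 29700, -14256, 22320, 26100, 36720, -1908, -2160, -48924, -57240, 5076, -25200, 66096, 19800],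
  ![-69588, 36909, 40500, 103878, 70740, -54135, 36585, 24615, -71730, 30321, -64800, 49905, 71280, -24714, 190620, -12528, -41229, -182115, 80676, -123660, -157455, -203580, 12663, 18720, 292059, 332910, -29871, 145710, -382896, -119790],
  ![-29700, 18225, 16200, 45630, 24300, -22275, 16605, 10935, -31590, 13365, -28080, 21465, 28080, -11610, 82620, -6480, -18225, -77355, 34020, -54540, -63855, -82620, 7155, 9720, 122715, 141750, -14175, 62910, -162000, -53190],
  ![6696, -3888, -3240, -9936, -6480, 6480, -3240, -1080, 7560, -2592, 6480, -5400, -6480, 2808, -19440, 1296, 3888, 16200, -9072, 12960, 14040, 19440, -1296, -2160, -26568, -32400, 1512, -14040, 37152, 10800],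
  ![-15600, 9720, 7560, 25680, 16560, -12600, 10440, 6720, -18600, 9000, -17280, 12720, 17280, -9120, 48960, -2880, -9720, -40320, 19440, -31680, -36240, -49680, 3240, 2640, 67680, 78480, -7680, 34080, -91200, -27600],
  ![87120, -51030, -48600, -138420, -83160, 66690, -52110, -33570, 92700, -40230, 86400, -63630, -86400, 37980, -245160, 17280, 51030, 223290, -100440, 158760, 195570, 255960, -18090, -24480, -364770, -414180, 41490, -184500, 478080, 156420],
  ![8424, -5022, -3240, -7884, -3240, 4050, -5670, -1890, 5940, -3078, 4320, -4590, -4320, 5292, -16200, 1944, 5022, 13770, -7128, 11880, 10530, 16200, -1674, -2160, -22842, -27540, 3618, -16740, 31968, 10260],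
  ![-37512, 21546, 21060, 57492, 36720, -30510, 19170, 14490, -39600, 16794, -36720, 27630, 36720, -12996, 104760, -7992, -21546, -99090, 44064, -68040, -82530, -110160, 7182, 11160, 156546, 181980, -16074, 79020, -207504, -66060],
  ![26640, -13770, -16200, -35820, -24840, 19710, -14850, -8190, 26820, -9450, 21600, -17730, -21600, 8820, -70200, 4320, 13770, 66150, -29160, 44280, 53550, 74520, -5670, -7200, -103950, -119340, 11790, -53820, 136800, 43020]]

def Mz : Matrix (Fin 30) (Fin 30) ℤ :=
  Matrix.of fun i j => (∏ k, ptsZ i k ^ mondeg j k) * 3 ^ (3 - ∑ k, mondeg j k)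

set_option maxRecDepth 100000 in
theorem NMz : Nz * Mz = (25920 : ℤ) • 1 := by decide

theorem normZ : ∀ i, (∑ k, (ptsZ i k) ^ 2) = 9 := by decide

theorem degle : ∀ j, (∑ k, mondeg j k) ≤ 3 := by decide

noncomputable def pts (i : Fin 30) : EuclideanSpace ℝ (Fin 4) :=
  (WithLp.equiv 2 (Fin 4 → ℝ)).symm (fun k => (ptsZ i k : ℝ) / 3)

lemma pts_apply (i : Fin 30) (k : Fin 4) : pts i k = (ptsZ i k : ℝ) / 3 := rfl

lemma pts_mem (i : Fin 30) : pts i ∈ Metric.sphere (0 : EuclideanSpace ℝ (Fin 4)) 1 := by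
  rw [mem_sphere_zero_iff_norm, EuclideanSpace.norm_eq]
  have h9 : (∑ k, ((ptsZ i k : ℝ)) ^ 2) = 9 := by
    exact_mod_cast normZ i
  have : ∑ k, ‖pts i k‖ ^ 2 = 1 := by
    simp only [pts_apply, Real.norm_eq_abs, sq_abs, div_pow, ← Finset.sum_div, h9]
    norm_num
  rw [this, Real.sqrt_one]

noncomputable def term (j : Fin 30) : MvPolynomial (Fin 4) ℝ :=
  ∏ k, (MvPolynomial.X k) ^ (mondeg j k)

lemma term_totalDegree (j : Fin 30) : (term j).totalDegree ≤ 3 :=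
  calc (term j).totalDegree ≤ ∑ k, ((MvPolynomial.X k ^ mondeg j k :
        MvPolynomial (Fin 4) ℝ)).totalDegree := MvPolynomial.totalDegree_finset_prod _ _
    _ = ∑ k, mondeg j k := by simp [MvPolynomial.totalDegree_X_pow]
    _ ≤ 3 := degle j

lemma eval_term (x : Fin 4 → ℝ) (j : Fin 30) :
    MvPolynomial.eval x (term j) = ∏ k, x k ^ mondeg j k := by
  simp [term]

open Pointwise in
lemma open_pos_toSphere :
    ((volume : Measure (EuclideanSpace ℝ (Fin 4))).toSphere).IsOpenPosMeasure := by
  constructor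
  intro U hU hne
  rw [Measure.toSphere_apply' _ hU.measurableSet]
  obtain ⟨W, hW, hWU⟩ := isOpen_induced_iff.mp hU
  obtain ⟨u, hu⟩ := hne
  have huW : (u : EuclideanSpace ℝ (Fin 4)) ∈ W := by
    rw [← hWU] at hu; exact hu
  have hun : ‖(u : EuclideanSpace ℝ (Fin 4))‖ = 1 := mem_sphere_zero_iff_norm.mp u.2
  have hSopen : IsOpen ((Metric.ball (0 : EuclideanSpace ℝ (Fin 4)) 1 ∩ {(0 : EuclideanSpace ℝ (Fin 4))}ᶜ) ∩
      (fun x : EuclideanSpace ℝ (Fin 4) => ‖x‖⁻¹ • x) ⁻¹' W) := by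
    apply ContinuousOn.isOpen_inter_preimage _ _ hW
    · apply ContinuousOn.fun_smul _ continuousOn_id
      apply ContinuousOn.inv₀ continuous_norm.continuousOn
      rintro x ⟨-, hx0⟩
      simpa [norm_eq_zero] using hx0
    · exact Metric.isOpen_ball.inter (isOpen_compl_iff.mpr isClosed_singleton)
  have hSne : ((Metric.ball (0 : EuclideanSpace ℝ (Fin 4)) 1 ∩ {(0 : EuclideanSpace ℝ (Fin 4))}ᶜ) ∩
      (fun x : EuclideanSpace ℝ (Fin 4) => ‖x‖⁻¹ • x) ⁻¹' W).Nonempty := by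
    refine ⟨(1/2 : ℝ) • (u : EuclideanSpace ℝ (Fin 4)), ⟨⟨?_, ?_⟩, ?_⟩⟩
    · simp only [mem_ball_zero_iff, norm_smul, hun]
      norm_num
    · simp only [Set.mem_compl_iff, Set.mem_singleton_iff, smul_eq_zero, not_or]
      constructor
      · norm_num
      · intro h; rw [h] at hun; simp at hun
    · have hns : ‖(1/2 : ℝ) • (u : EuclideanSpace ℝ (Fin 4))‖ = 1/2 := by
        rw [norm_smul, hun]; simp
      simp only [Set.mem_preimage, hns, smul_smul]
      norm_num
      exact huW
  have hsub : ((Metric.ball (0 : EuclideanSpace ℝ (Fin 4)) 1 ∩ {(0 : EuclideanSpace ℝ (Fin 4))}ᶜ) ∩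
      (fun x : EuclideanSpace ℝ (Fin 4) => ‖x‖⁻¹ • x) ⁻¹' W)
      ⊆ Set.Ioo (0:ℝ) 1 • (Subtype.val '' U) := by
    rintro x ⟨⟨hb, h0⟩, hw⟩
    have hx0 : x ≠ 0 := by simpa using h0
    have hnx : 0 < ‖x‖ := norm_pos_iff.mpr hx0
    have hnx1 : ‖x‖ < 1 := mem_ball_zero_iff.mp hb
    have hyn : ‖‖x‖⁻¹ • x‖ = 1 := by
      rw [norm_smul, norm_inv, norm_norm, inv_mul_cancel₀ hnx.ne']
    have hyU : (⟨‖x‖⁻¹ • x, mem_sphere_zero_iff_norm.mpr hyn⟩ :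
        Metric.sphere (0 : EuclideanSpace ℝ (Fin 4)) 1) ∈ U := by
      rw [← hWU]
      exact hw
    refine ⟨‖x‖, ⟨hnx, hnx1⟩, ‖x‖⁻¹ • x,
      ⟨⟨‖x‖⁻¹ • x, mem_sphere_zero_iff_norm.mpr hyn⟩, hyU, rfl⟩, ?_⟩
    show ‖x‖ • ‖x‖⁻¹ • x = x
    rw [smul_smul, mul_inv_cancel₀ hnx.ne', one_smul]
  have hvol : volume ((Metric.ball (0 : EuclideanSpace ℝ (Fin 4)) 1 ∩ {(0 : EuclideanSpace ℝ (Fin 4))}ᶜ) ∩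
      (fun x : EuclideanSpace ℝ (Fin 4) => ‖x‖⁻¹ • x) ⁻¹' W) ≠ 0 :=
    (hSopen.measure_pos volume hSne).ne'
  apply mul_ne_zero
  · simp
  · exact fun h => hvol (measure_mono_null hsub h)

theorem main_card (s : Finset (EuclideanSpace ℝ (Fin 4)))
    (hdes : ∀ P : MvPolynomial (Fin 4) ℝ, P.totalDegree ≤ 6 →
      (∑ v ∈ s, MvPolynomial.eval (fun i => v i) P) / s.card = sphereAvg P) :
    30 ≤ s.card := by
  by_contra hlt
  push_neg at hlt
  -- the 30 monomial functions on s are linearly dependent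
  set w : Fin 30 → (↥s → ℝ) := fun j v => ∏ k, (v : EuclideanSpace ℝ (Fin 4)) k ^ mondeg j k
    with hw
  have hnli : ¬ LinearIndependent ℝ w := by
    intro hli
    have := hli.fintype_card_le_finrank
    rw [Module.finrank_fintype_fun_eq_card, Fintype.card_coe] at this
    simp only [Fintype.card_fin] at this
    omega
  obtain ⟨g, hgsum, j₀, hj₀⟩ := Fintype.not_linearIndependent_iff.mp hnli
  -- the polynomial f
  set f : MvPolynomial (Fin 4) ℝ := ∑ j, MvPolynomial.C (g j) * term j with hf
  have hfdeg : f.totalDegree ≤ 3 := by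
    refine (MvPolynomial.totalDegree_finset_sum _ _).trans (Finset.sup_le fun j _ => ?_)
    refine (MvPolynomial.totalDegree_mul _ _).trans ?_
    simpa [MvPolynomial.totalDegree_C] using term_totalDegree j
  have heval : ∀ x : Fin 4 → ℝ, MvPolynomial.eval x f = ∑ j, g j * ∏ k, x k ^ mondeg j k := by
    intro x
    simp [hf, eval_term]
  have hvanish : ∀ v : ↥s, MvPolynomial.eval (fun i => (v : EuclideanSpace ℝ (Fin 4)) i) f = 0 := by
    intro v
    have := congrFun hgsum v
    simpa [heval, hw, Finset.sum_apply] using this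
  -- the squared polynomial
  set Q : MvPolynomial (Fin 4) ℝ := f * f with hQ
  have hQdeg : Q.totalDegree ≤ 6 :=
    (MvPolynomial.totalDegree_mul _ _).trans (by omega)
  have hsum0 : (∑ v ∈ s, MvPolynomial.eval (fun i => v i) Q) = 0 := by
    refine Finset.sum_eq_zero fun v hv => ?_
    rw [hQ, _root_.map_mul, hvanish ⟨v, hv⟩, mul_zero]
  have havg0 : sphereAvg Q = 0 := by
    rw [← hdes Q hQdeg, hsum0, zero_div]
  -- the function on the sphere
  set μ := (volume : Measure (EuclideanSpace ℝ (Fin 4))).toSphere with hμ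
  have hopos : μ.IsOpenPosMeasure := open_pos_toSphere
  set G : Metric.sphere (0 : EuclideanSpace ℝ (Fin 4)) 1 → ℝ :=
    fun x => MvPolynomial.eval (fun i => (x : EuclideanSpace ℝ (Fin 4)) i) Q with hG
  have hGcont : Continuous G := by
    rw [hG]
    exact (MvPolynomial.continuous_eval Q).comp (continuous_pi fun k =>
      (EuclideanSpace.proj k).continuous.comp continuous_subtype_val)
  have hGnn : ∀ x, 0 ≤ G x := by
    intro x
    rw [hG]
    simp only [hQ, _root_.map_mul]
    exact mul_self_nonneg _
  have hGint : Integrable G μ :=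
    hGcont.integrable_of_hasCompactSupport ((isClosed_tsupport G).isCompact)
  have hμuniv0 : μ Set.univ ≠ 0 :=
    hopos.open_pos Set.univ isOpen_univ ⟨⟨pts 0, pts_mem 0⟩, trivial⟩
  have hμunivtop : μ Set.univ ≠ ⊤ := measure_ne_top _ _
  have hint0 : ∫ x, G x ∂μ = 0 := by
    have h := (average_eq (μ := μ) G).symm.trans havg0
    rcases smul_eq_zero.mp h with h' | h'
    · exact absurd h' (by
        simp only [ne_eq, inv_eq_zero]
        exact ENNReal.toReal_ne_zero.mpr ⟨hμuniv0, hμunivtop⟩)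
    · exact h'
  have hGae : G =ᵐ[μ] 0 := (integral_eq_zero_iff_of_nonneg hGnn hGint).mp hint0
  have hG0 : G = 0 := (hGcont.ae_eq_iff_eq μ continuous_const).mp hGae
  -- conclude matrix relation
  have hMr : ∀ i : Fin 30, ∑ j, (∏ k, pts i k ^ mondeg j k) * g j = 0 := by
    intro i
    have h1 : G ⟨pts i, pts_mem i⟩ = 0 := by rw [hG0]; rfl
    rw [hG] at h1
    simp only [hQ, _root_.map_mul] at h1
    have h2 : MvPolynomial.eval (fun k => pts i k) f = 0 := by
      rcases mul_self_eq_zero.mp h1 with h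
      exact h
    rw [heval] at h2
    rw [← h2]
    exact Finset.sum_congr rfl fun j _ => mul_comm _ _
  -- transfer through the integer matrix
  set Mr : Matrix (Fin 30) (Fin 30) ℝ := Matrix.of fun i j => ∏ k, pts i k ^ mondeg j k
    with hMrdef
  have hMrv : Mr *ᵥ g = 0 := by
    funext i
    simpa [Matrix.mulVec, dotProduct, hMrdef] using hMr i
  have hbridge : Mz.map (Int.cast : ℤ → ℝ) = (27 : ℝ) • Mr := by
    funext i j
    have hd := degle j
    have h27 : (27:ℝ) = 3 ^ (3 - ∑ k, mondeg j k) * 3 ^ (∑ k, mondeg j k) := by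
      rw [← pow_add, Nat.sub_add_cancel hd]; norm_num
    have key : (∏ k, pts i k ^ mondeg j k)
        = (∏ k, (ptsZ i k : ℝ) ^ mondeg j k) / 3 ^ (∑ k, mondeg j k) := by
      simp [pts_apply, div_pow, Finset.prod_div_distrib, Finset.prod_pow_eq_pow_sum]
    simp only [Matrix.map_apply, Matrix.smul_apply, smul_eq_mul, hMrdef, Matrix.of_apply,
      Mz, key]
    push_cast
    rw [h27]
    field_simp
  have hNMr : (Nz.map (Int.cast : ℤ → ℝ)) * (Mz.map (Int.cast : ℤ → ℝ))
      = (25920 : ℝ) • 1 := by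
    rw [show (Nz.map (Int.cast : ℤ → ℝ)) = Nz.map (Int.castRingHom ℝ) from rfl,
      show (Mz.map (Int.cast : ℤ → ℝ)) = Mz.map (Int.castRingHom ℝ) from rfl,
      ← Matrix.map_mul, NMz]
    funext i j
    simp only [Matrix.map_apply, Matrix.smul_apply, Matrix.one_apply, smul_eq_mul]
    by_cases h : i = j <;> simp [h]
  have hg0 : (25920 : ℝ) • g = 0 := by
    calc (25920 : ℝ) • g = ((25920 : ℝ) • (1 : Matrix (Fin 30) (Fin 30) ℝ)) *ᵥ g := by
          rw [Matrix.smul_mulVec, Matrix.one_mulVec]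
      _ = (Nz.map (Int.cast : ℤ → ℝ)) *ᵥ ((Mz.map (Int.cast : ℤ → ℝ)) *ᵥ g) := by
          rw [Matrix.mulVec_mulVec, hNMr]
      _ = (Nz.map (Int.cast : ℤ → ℝ)) *ᵥ (((27 : ℝ) • Mr) *ᵥ g) := by rw [hbridge]
      _ = 0 := by
          rw [Matrix.smul_mulVec, hMrv, smul_zero, Matrix.mulVec_zero]
  have : g = 0 := by
    rcases smul_eq_zero.mp hg0 with h | h
    · norm_num at h
    · exact h
  rw [this] at hj₀
  simp at hj₀

theorem stmt19 (s : Finset (EuclideanSpace ℝ (Fin 4)))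
    (hsub : ∀ v ∈ s, v ∈ Metric.sphere (0 : EuclideanSpace ℝ (Fin 4)) 1)
    (hdes : ∀ P : MvPolynomial (Fin 4) ℝ, P.totalDegree ≤ 6 →
      (∑ v ∈ s, MvPolynomial.eval (fun i => v i) P) / s.card = sphereAvg P) :
    30 ≤ s.card ∧ s.card ≠ 24 := by
  have h := main_card s hdes
  exact ⟨h, by omega⟩
end
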